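/- arXiv:1110.6696 — 8 statements merged into one kernel-verified Lean document; each statement's English description precedes it below -/
import Mathlib

section
/- For every r ≥ 1 there exists a constant C = C(r) > 0 with the following property: for every positive integer N, every real x with |x| ≤ N² + N, and every real h ≥ N², one has A(x + ih, r) ≤ C · h^{1/(2r) − 1} (and the same bound for A(x − ih, r)); consequently, for every m > 0 there is a constant C' = C'(r, m) > 0 such that for all ω > 0 and h ≥ N², ∫_{−ω}^{N²+N} A(x + ih, r)^m dx ≤ C' · (N² + ω) · h^{−m(1 − 1/(2r))}. -/
open MeasureTheory

noncomputable def A (z : ℂ) (r : ℝ) : ℝ :=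
  (∑' k : ℕ, 1 / ‖z - (k : ℂ) ^ 2‖ ^ r) ^ (1 / r)

/-! Write `h = |Im z|` and assume `Re z ≤ 2h`, `h ≥ 1`. Each term of the series satisfies
`h + k² ≤ 4‖z - k²‖`, and since `r ≥ 1`, `(h + k²)^r ≥ h^(r-1) (h + k²)`; so the series is at
most `4^r h^(1-r) ∑ 1/(h + k²)`. With `c = √h` the terms telescope,
`1/(c² + t²) ≤ 2/(c + t - 1/2) - 2/(c + t + 1/2)`, so `∑ 1/(h + k²) ≤ 4/√h`, and taking
`r`-th roots gives `A(z, r) ≤ 16 h^(1/(2r) - 1)`. The integral bound is this pointwise bound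
times the length of the interval. -/

open Real Finset

lemma one_div_sq_add_sq_le_sub {c : ℝ} (hc : 1 / 2 < c) {t : ℝ} (ht : 0 ≤ t) :
    1 / (c ^ 2 + t ^ 2) ≤ 2 / (c + t - 1 / 2) - 2 / (c + t + 1 / 2) := by
  have hpos : 0 < c + t - 1 / 2 := by linarith
  rw [div_sub_div _ _ hpos.ne' (by linarith), div_le_div_iff₀ (by positivity) (by positivity)]
  nlinarith [sq_nonneg (c - t)]

lemma sum_range_one_div_sq_add_sq_le {c : ℝ} (hc : 1 / 2 < c) (n : ℕ) :
    ∑ k ∈ range n, 1 / (c ^ 2 + (k : ℝ) ^ 2) ≤ 2 / (c - 1 / 2) := by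
  set g : ℕ → ℝ := fun k => 2 / (c + k - 1 / 2)
  calc ∑ k ∈ range n, 1 / (c ^ 2 + (k : ℝ) ^ 2)
      ≤ ∑ k ∈ range n, (g k - g (k + 1)) := sum_le_sum fun k _ => by
        have hg : g (k + 1) = 2 / (c + k + 1 / 2) := by
          simp only [g]; push_cast; ring_nf
        exact hg ▸ one_div_sq_add_sq_le_sub hc k.cast_nonneg
    _ = g 0 - g n := sum_range_sub' g n
    _ ≤ 2 / (c - 1 / 2) := by
        have : 0 ≤ g n := div_nonneg zero_le_two (by linarith [n.cast_nonneg (α := ℝ)])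
        simp only [g, CharP.cast_eq_zero, add_zero]; linarith

lemma abs_im_add_le_four_mul_norm_sub {z : ℂ} (hz : z.re ≤ 2 * |z.im|) (t : ℝ) :
    |z.im| + t ≤ 4 * ‖z - t‖ := by
  have him : |z.im| ≤ ‖z - t‖ := by simpa using Complex.abs_im_le_norm (z - t)
  have hre : |z.re - t| ≤ ‖z - t‖ := by simpa using Complex.abs_re_le_norm (z - t)
  linarith [neg_abs_le (z.re - t)]

lemma one_div_norm_sub_rpow_le {z : ℂ} (hz : z.re ≤ 2 * |z.im|) (him : 0 < |z.im|) {r : ℝ}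
    (hr : 1 ≤ r) {t : ℝ} (ht : 0 ≤ t) :
    1 / ‖z - t‖ ^ r ≤ 4 ^ r * |z.im| ^ (1 - r) * (1 / (|z.im| + t)) := by
  set h := |z.im|
  have hpos : 0 < h + t := by positivity
  have hnorm : (h + t) / 4 ≤ ‖z - t‖ := by linarith [abs_im_add_le_four_mul_norm_sub hz t]
  calc 1 / ‖z - t‖ ^ r ≤ 1 / ((h + t) / 4) ^ r := by gcongr
    _ = 4 ^ r / ((h + t) ^ (r - 1) * (h + t)) := by
        rw [div_rpow hpos.le (by norm_num), one_div_div, rpow_sub_one hpos.ne',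
          div_mul_cancel₀ _ hpos.ne']
    _ ≤ 4 ^ r / (h ^ (r - 1) * (h + t)) := by gcongr; linarith
    _ = 4 ^ r * h ^ (1 - r) * (1 / (h + t)) := by
        rw [show 1 - r = -(r - 1) by ring, rpow_neg him.le]; field_simp

lemma tsum_one_div_norm_sub_sq_rpow_le {z : ℂ} (hz : z.re ≤ 2 * |z.im|) (him : 1 ≤ |z.im|)
    {r : ℝ} (hr : 1 ≤ r) :
    ∑' k : ℕ, 1 / ‖z - (k : ℂ) ^ 2‖ ^ r ≤ 4 ^ (r + 1) * |z.im| ^ (1 / 2 - r) := by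
  set h := |z.im|
  have hsqrt : 1 ≤ √h := one_le_sqrt.mpr him
  refine Real.tsum_le_of_sum_range_le (fun k => by positivity) fun n => ?_
  calc ∑ k ∈ range n, 1 / ‖z - (k : ℂ) ^ 2‖ ^ r
      ≤ ∑ k ∈ range n, 4 ^ r * h ^ (1 - r) * (1 / (√h ^ 2 + (k : ℝ) ^ 2)) :=
        sum_le_sum fun k _ => by
          rw [sq_sqrt (by positivity)]
          exact_mod_cast one_div_norm_sub_rpow_le hz (by positivity) hr (sq_nonneg (k : ℝ))
    _ = 4 ^ r * h ^ (1 - r) * ∑ k ∈ range n, 1 / (√h ^ 2 + (k : ℝ) ^ 2) := (mul_sum ..).symm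
    _ ≤ 4 ^ r * h ^ (1 - r) * (2 / (√h - 1 / 2)) := by
        gcongr; exact sum_range_one_div_sq_add_sq_le (by linarith) n
    _ ≤ 4 ^ r * h ^ (1 - r) * (4 / √h) := by
        refine mul_le_mul_of_nonneg_left ?_ (by positivity)
        rw [div_le_div_iff₀ (by linarith) (by positivity)]; linarith
    _ = 4 ^ (r + 1) * h ^ (1 / 2 - r) := by
        have hsplit : h ^ (1 - r) = h ^ (1 / 2 - r) * √h := by
          rw [sqrt_eq_rpow, ← rpow_add (by positivity)]; ring_nf
        rw [hsplit, rpow_add_one (by norm_num)]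
        field_simp

lemma A_le_of_re_le {z : ℂ} (hz : z.re ≤ 2 * |z.im|) (him : 1 ≤ |z.im|) {r : ℝ}
    (hr : 1 ≤ r) :
    A z r ≤ 16 * |z.im| ^ (1 / (2 * r) - 1) := by
  have hr0 : 0 < r := by linarith
  have h0 : 0 ≤ |z.im| := abs_nonneg _
  calc A z r ≤ (4 ^ (r + 1) * |z.im| ^ (1 / 2 - r)) ^ (1 / r) :=
        rpow_le_rpow (tsum_nonneg fun k => by positivity)
          (tsum_one_div_norm_sub_sq_rpow_le hz him hr) (by positivity)
    _ = 4 ^ (1 + 1 / r) * |z.im| ^ (1 / (2 * r) - 1) := by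
        rw [mul_rpow (by positivity) (by positivity), ← rpow_mul (by norm_num), ← rpow_mul h0]
        congr 2 <;> field_simp
    _ ≤ 16 * |z.im| ^ (1 / (2 * r) - 1) := by
        gcongr
        calc (4 : ℝ) ^ (1 + 1 / r) ≤ 4 ^ (2 : ℝ) :=
              rpow_le_rpow_of_exponent_le (by norm_num) (by linarith [(div_le_one hr0).2 hr])
          _ = 16 := by norm_num

lemma A_nonneg (z : ℂ) (r : ℝ) : 0 ≤ A z r :=
  rpow_nonneg (tsum_nonneg fun _ => by positivity) _

lemma A_ofReal_add_mul_I_le {x h r : ℝ} (hr : 1 ≤ r) (hh : 1 ≤ h) (hx : x ≤ 2 * h) :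
    A ((x : ℂ) + h * Complex.I) r ≤ 16 * h ^ (1 / (2 * r) - 1) ∧
      A ((x : ℂ) - h * Complex.I) r ≤ 16 * h ^ (1 / (2 * r) - 1) := by
  have habs : |h| = h := abs_of_pos (one_pos.trans_le hh)
  constructor
  · simpa [habs] using
      A_le_of_re_le (z := x + h * Complex.I) (by simpa [habs]) (by simpa [habs]) hr
  · simpa [habs] using
      A_le_of_re_le (z := x - h * Complex.I) (by simpa [habs]) (by simpa [habs]) hr

theorem stmt0 (r : ℝ) (hr : 1 ≤ r) :
    (∃ C : ℝ, 0 < C ∧ ∀ N : ℕ, 0 < N → ∀ x : ℝ, |x| ≤ (N : ℝ) ^ 2 + N →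
      ∀ h : ℝ, (N : ℝ) ^ 2 ≤ h →
        A ((x : ℂ) + h * Complex.I) r ≤ C * h ^ (1 / (2 * r) - 1) ∧
        A ((x : ℂ) - h * Complex.I) r ≤ C * h ^ (1 / (2 * r) - 1)) ∧
    (∀ m : ℝ, 0 < m → ∃ C' : ℝ, 0 < C' ∧ ∀ N : ℕ, 0 < N → ∀ ω : ℝ, 0 < ω →
      ∀ h : ℝ, (N : ℝ) ^ 2 ≤ h →
        (∫ x in (-ω)..((N : ℝ) ^ 2 + N), A ((x : ℂ) + h * Complex.I) r ^ m) ≤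
          C' * ((N : ℝ) ^ 2 + ω) * h ^ (-(m * (1 - 1 / (2 * r))))) := by
  have hsize : ∀ N : ℕ, 0 < N → ∀ h : ℝ, (N : ℝ) ^ 2 ≤ h →
      1 ≤ h ∧ (N : ℝ) ≤ N ^ 2 ∧ (N : ℝ) ^ 2 + N ≤ 2 * h := fun N hN h hh => by
    have : (1 : ℝ) ≤ N := by exact_mod_cast hN
    refine ⟨by nlinarith, by nlinarith, by nlinarith⟩
  refine ⟨⟨16, by norm_num, fun N hN0 x hx h hh => ?_⟩, fun m hm => ?_⟩
  · obtain ⟨h1, -, hNh⟩ := hsize N hN0 h hh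
    exact A_ofReal_add_mul_I_le hr h1 ((le_abs_self x).trans (hx.trans hNh))
  refine ⟨2 * 16 ^ m, by positivity, fun N hN0 ω hω h hh => ?_⟩
  obtain ⟨h1, hNsq, hNh⟩ := hsize N hN0 h hh
  have h0 : 0 < h := one_pos.trans_le h1
  set e := -(m * (1 - 1 / (2 * r)))
  have hpoint : ∀ x ∈ Set.uIoc (-ω) ((N : ℝ) ^ 2 + N),
      ‖A ((x : ℂ) + h * Complex.I) r ^ m‖ ≤ 16 ^ m * h ^ e := by
    intro x hx
    rw [Set.uIoc_of_le (by linarith [sq_nonneg (N : ℝ)])] at hx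
    have hA := (A_ofReal_add_mul_I_le hr h1 (hx.2.trans hNh)).1
    rw [Real.norm_of_nonneg (rpow_nonneg (A_nonneg _ _) m),
      show e = (1 / (2 * r) - 1) * m by ring,
      rpow_mul h0.le, ← mul_rpow (by norm_num) (by positivity)]
    exact rpow_le_rpow (A_nonneg _ _) hA hm.le
  calc (∫ x in (-ω)..((N : ℝ) ^ 2 + N), A ((x : ℂ) + h * Complex.I) r ^ m)
      ≤ ‖∫ x in (-ω)..((N : ℝ) ^ 2 + N), A ((x : ℂ) + h * Complex.I) r ^ m‖ :=
        le_abs_self _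
    _ ≤ 16 ^ m * h ^ e * |(N : ℝ) ^ 2 + N - -ω| :=
        intervalIntegral.norm_integral_le_of_norm_le_const hpoint
    _ ≤ 2 * 16 ^ m * ((N : ℝ) ^ 2 + ω) * h ^ e := by
        rw [sub_neg_eq_add, abs_of_pos (by positivity)]
        nlinarith [show 0 < 16 ^ m * h ^ e by positivity]
end

section
/- There exist constants c, C > 0 such that for every integer N ≥ 2 and every y ∈ ℝ, writing λ = N² + N + iy: (i) if |y| ≤ N then c · (log N)/N ≤ A(λ, 1) ≤ C · (log N)/N; (ii) if N ≤ |y| ≤ N² then c · (1/N) · log(1 + N²/|y|) ≤ A(λ, 1) ≤ C · (1/N) · log(1 + N²/|y|); (iii) if |y| ≥ N² then c/√|y| ≤ A(λ, 1) ≤ C/√|y|. -/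
/-- The point `λ = N² + N + iy`. -/
noncomputable def lam (N : ℕ) (y : ℝ) : ℂ :=
  (((N : ℝ) ^ 2 + N : ℝ) : ℂ) + (y : ℝ) * Complex.I

/-!
Write `λ - k² = (N² + N - k²) + iy`. Since `(|u| + |v|)/2 ≤ |u + iv| ≤ |u| + |v|`, the sum
`A(λ, 1)` is comparable to `S(a) = ∑ₖ 1/(|N² + N - k²| + a)` with `a = |y|`.
For `k = N - j` (`j ≤ N`) the gap `|N² + N - k²|` lies between `N(j+1)` and `2N(j+1)`; for
`k = N + 1 + j` it is at least `j² + N(j+1)`. The block `k ≤ N` is therefore the harmonic-type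
sum `∑_{j ≤ N} 1/(N(j+1) + a)`, which comparison with `∫ dt/(Nt + a)` evaluates as
`(1/N) log(1 + N²/a)` up to constants, or `(log N)/N` when `a ≤ N`. The block `k > N` is at most
its first `m` terms plus the telescoping tail `∑_{j ≥ m} 1/(j(j+1)) = 1/m`: with `m = N + 1` it
is dominated by the first block, and for `a ≥ N²` the choice `m ≈ √a` gives `O(1/√a)`,
matched from below by the `≈ √a` squares `k² ≤ a`, each contributing about `1/a`.
-/

open Finset Real

lemma one_half_le_log {x : ℝ} (hx : 2 ≤ x) : 1 / 2 ≤ log x := by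
  linarith [log_two_gt_d9, log_le_log two_pos hx]

lemma log_le_two_mul_log {x y : ℝ} (hx : 0 < x) (h : x ≤ y ^ 2) : log x ≤ 2 * log y := by
  calc log x ≤ log (y ^ 2) := log_le_log hx h
    _ = 2 * log y := by rw [log_pow]; norm_num

lemma integral_inv_mul_add {c a x y : ℝ} (hc : 0 < c) (hx : 0 < c * x + a)
    (hy : 0 < c * y + a) :
    ∫ t in x..y, (c * t + a)⁻¹ = c⁻¹ * log ((c * y + a) / (c * x + a)) := by
  rw [intervalIntegral.integral_comp_mul_add (fun t => t⁻¹) hc.ne', integral_inv_of_pos hx hy,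
    smul_eq_mul]

lemma antitoneOn_inv_mul_add {c a x₀ : ℝ} (hc : 0 ≤ c) (hx₀ : 0 < c * x₀ + a) :
    AntitoneOn (fun t => (c * t + a)⁻¹) (Set.Ici x₀) := by
  intro s hs t _ hst
  have : c * x₀ ≤ c * s := mul_le_mul_of_nonneg_left hs hc
  exact inv_anti₀ (by linarith) (by gcongr)

lemma sum_range_inv_mul_succ_add_le_log {c a : ℝ} (hc : 0 < c) (ha : 0 < a) (n : ℕ) :
    ∑ j ∈ range n, (c * (j + 1) + a)⁻¹ ≤ c⁻¹ * log ((c * n + a) / a) := by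
  have h := ((antitoneOn_inv_mul_add hc.le (x₀ := 0) (by simpa using ha)).mono
    Set.Icc_subset_Ici_self).sum_le_integral (a := n)
  simp only [zero_add, Nat.cast_add, Nat.cast_one] at h
  rwa [integral_inv_mul_add hc (by simpa using ha) (by positivity), mul_zero, zero_add] at h

lemma log_le_sum_range_inv_mul_succ_add {c a : ℝ} (hc : 0 < c) (ha : 0 ≤ a) (n : ℕ) :
    c⁻¹ * log ((c * (n + 1) + a) / (c + a)) ≤ ∑ j ∈ range n, (c * (j + 1) + a)⁻¹ := by
  have h := ((antitoneOn_inv_mul_add (a := a) (x₀ := 1) hc.le (by positivity)).mono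
    Set.Icc_subset_Ici_self).integral_le_sum (a := n)
  rw [integral_inv_mul_add hc (by positivity) (by positivity), mul_one] at h
  simpa only [add_comm (1 : ℝ)] using h

lemma sum_range_inv_mul_succ_add_le {c a : ℝ} (hc : 0 < c) (ha : 0 ≤ a) (n : ℕ) :
    ∑ j ∈ range n, (c * (j + 1) + a)⁻¹ ≤ c⁻¹ * (1 + log n) := by
  calc ∑ j ∈ range n, (c * (j + 1) + a)⁻¹ ≤ ∑ j ∈ range n, c⁻¹ * ((j : ℝ) + 1)⁻¹ := by
        gcongr with j
        rw [← mul_inv]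
        gcongr
        linarith
    _ = c⁻¹ * harmonic n := by simp [harmonic, ← mul_sum]
    _ ≤ c⁻¹ * (1 + log n) := by gcongr; exact harmonic_le_one_add_log n

lemma sum_range_le_sum_range_add_inv {f : ℕ → ℝ} {m : ℕ} (hm : 0 < m) (hf : ∀ j, 0 ≤ f j)
    (hfm : ∀ j, m ≤ j → f j ≤ ((j : ℝ) * (j + 1))⁻¹) (n : ℕ) :
    ∑ j ∈ range n, f j ≤ ∑ j ∈ range m, f j + (m : ℝ)⁻¹ := by
  have telescope (n : ℕ) (hn : m ≤ n) :
      ∑ j ∈ range n, f j ≤ ∑ j ∈ range m, f j + (m : ℝ)⁻¹ - (n : ℝ)⁻¹ := by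
    induction n, hn using Nat.le_induction with
    | base => simp
    | succ n hmn ih =>
      have hn : (0 : ℝ) < n := by exact_mod_cast hm.trans_le hmn
      have : ((n : ℝ) * (n + 1))⁻¹ = (n : ℝ)⁻¹ - ((n + 1 : ℕ) : ℝ)⁻¹ := by
        push_cast; field_simp; ring
      rw [sum_range_succ]
      linarith [hfm n hmn]
  calc ∑ j ∈ range n, f j ≤ ∑ j ∈ range (max n m), f j :=
        sum_le_sum_of_subset_of_nonneg (range_mono (le_max_left n m)) fun j _ _ => hf j
    _ ≤ ∑ j ∈ range m, f j + (m : ℝ)⁻¹ - ((max n m : ℕ) : ℝ)⁻¹ :=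
        telescope _ (le_max_right n m)
    _ ≤ ∑ j ∈ range m, f j + (m : ℝ)⁻¹ := by
        linarith [inv_nonneg.mpr (Nat.cast_nonneg (α := ℝ) (max n m))]

noncomputable def sqGap (N k : ℕ) : ℝ := |((N : ℝ) ^ 2 + N) - (k : ℝ) ^ 2|

noncomputable def gapSum (N : ℕ) (a : ℝ) : ℝ := ∑' k, (sqGap N k + a)⁻¹

section sqGap

variable {N j : ℕ}

lemma sqGap_sub (hj : j ≤ N) : sqGap N (N - j) = N + 2 * N * j - (j : ℝ) ^ 2 := by
  have hjN : (j : ℝ) ≤ N := by exact_mod_cast hj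
  rw [sqGap, Nat.cast_sub hj, abs_of_nonneg (by nlinarith)]
  ring

lemma mul_succ_le_sqGap_sub (hj : j ≤ N) : N * (j + 1 : ℝ) ≤ sqGap N (N - j) := by
  have hjN : (j : ℝ) ≤ N := by exact_mod_cast hj
  rw [sqGap_sub hj]
  nlinarith

lemma sqGap_sub_le (hj : j ≤ N) : sqGap N (N - j) ≤ 2 * N * (j + 1 : ℝ) := by
  rw [sqGap_sub hj]
  nlinarith [Nat.cast_nonneg (α := ℝ) N]

lemma sq_add_mul_succ_le_sqGap_add : (j : ℝ) ^ 2 + N * (j + 1) ≤ sqGap N (j + (N + 1)) := by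
  have hN := Nat.cast_nonneg (α := ℝ) N
  have hj := Nat.cast_nonneg (α := ℝ) j
  rw [sqGap, Nat.cast_add, abs_of_nonpos (by push_cast; nlinarith)]
  push_cast
  nlinarith

lemma le_sqGap (N k : ℕ) : (N : ℝ) ≤ sqGap N k := by
  have hN := Nat.cast_nonneg (α := ℝ) N
  rcases le_or_gt k N with hk | hk
  · obtain ⟨j, hj, rfl⟩ : ∃ j ≤ N, k = N - j := ⟨N - k, N.sub_le k, by omega⟩
    nlinarith [mul_succ_le_sqGap_sub hj, Nat.cast_nonneg (α := ℝ) j]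
  · obtain ⟨j, rfl⟩ : ∃ j, k = j + (N + 1) := ⟨k - (N + 1), by omega⟩
    nlinarith [sq_add_mul_succ_le_sqGap_add (N := N) (j := j), Nat.cast_nonneg (α := ℝ) j]

lemma sqGap_le {k : ℕ} {a : ℝ} (hNa : (N : ℝ) ^ 2 + N ≤ 2 * a) (hka : (k : ℝ) ^ 2 ≤ a) :
    sqGap N k ≤ 2 * a := by
  rw [sqGap, abs_le]
  constructor <;> nlinarith [Nat.cast_nonneg (α := ℝ) N, Nat.cast_nonneg (α := ℝ) k]

end sqGap

section gapSum

variable {N : ℕ} {a : ℝ} (hN : 0 < N) (ha : 0 ≤ a)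
include hN ha

lemma sqGap_add_pos (k : ℕ) : 0 < sqGap N k + a := by
  have : (0 : ℝ) < N := by exact_mod_cast hN
  linarith [le_sqGap N k]

lemma sum_range_inv_sqGap_add_tail_le (m : ℕ) (hm : 0 < m) (n : ℕ) :
    ∑ j ∈ range n, (sqGap N (j + (N + 1)) + a)⁻¹ ≤
      ∑ j ∈ range m, (N * (j + 1 : ℝ) + a)⁻¹ + (m : ℝ)⁻¹ := by
  have hNr : (1 : ℝ) ≤ N := by exact_mod_cast hN
  have tail_le (j : ℕ) :
      (sqGap N (j + (N + 1)) + a)⁻¹ ≤ ((j : ℝ) ^ 2 + N * (j + 1) + a)⁻¹ :=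
    inv_anti₀ (by positivity) (by linarith [sq_add_mul_succ_le_sqGap_add (N := N) (j := j)])
  calc ∑ j ∈ range n, (sqGap N (j + (N + 1)) + a)⁻¹
      ≤ ∑ j ∈ range m, (sqGap N (j + (N + 1)) + a)⁻¹ + (m : ℝ)⁻¹ := by
        refine sum_range_le_sum_range_add_inv (f := fun j => (sqGap N (j + (N + 1)) + a)⁻¹) hm
          (fun j => inv_nonneg.mpr (sqGap_add_pos hN ha _).le)
          (fun j hj => (tail_le j).trans (inv_anti₀ ?_ ?_)) n
        · have : (1 : ℝ) ≤ j := by exact_mod_cast hm.trans_le hj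
          positivity
        · nlinarith [Nat.cast_nonneg (α := ℝ) j]
    _ ≤ ∑ j ∈ range m, (N * (j + 1 : ℝ) + a)⁻¹ + (m : ℝ)⁻¹ := by
        refine add_le_add_left (sum_le_sum fun j _ => ?_) _
        have hj := Nat.cast_nonneg (α := ℝ) j
        exact (tail_le j).trans (inv_anti₀ (by nlinarith : (0 : ℝ) < N * (j + 1) + a)
          (by nlinarith))

lemma summable_inv_sqGap_add : Summable fun k => (sqGap N k + a)⁻¹ :=
  (summable_nat_add_iff (N + 1)).mp <| summable_of_sum_range_le
    (fun _ => inv_nonneg.mpr (sqGap_add_pos hN ha _).le)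
    (sum_range_inv_sqGap_add_tail_le hN ha 1 one_pos)

lemma gapSum_le (m : ℕ) (hm : 0 < m) :
    gapSum N a ≤ ∑ j ∈ range (N + 1), (N * (j + 1 : ℝ) + a)⁻¹ +
      ∑ j ∈ range m, (N * (j + 1 : ℝ) + a)⁻¹ + (m : ℝ)⁻¹ := by
  rw [gapSum, ← (summable_inv_sqGap_add hN ha).sum_add_tsum_nat_add (N + 1), add_assoc]
  refine add_le_add ?_ ?_
  · rw [← sum_range_reflect]
    refine sum_le_sum fun j hj => ?_
    have hj : j ≤ N := Nat.lt_succ_iff.mp (mem_range.mp hj)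
    rw [show N + 1 - 1 - j = N - j by omega]
    exact inv_anti₀ (by positivity) (by linarith [mul_succ_le_sqGap_sub hj])
  · exact Real.tsum_le_of_sum_range_le (fun j => inv_nonneg.mpr (sqGap_add_pos hN ha _).le)
      (sum_range_inv_sqGap_add_tail_le hN ha m hm)

lemma sum_range_inv_two_mul_add_le_gapSum :
    ∑ j ∈ range (N + 1), (2 * N * (j + 1 : ℝ) + a)⁻¹ ≤ gapSum N a := by
  refine le_trans ?_ ((summable_inv_sqGap_add hN ha).sum_le_tsum (range (N + 1))
    fun k _ => inv_nonneg.mpr (sqGap_add_pos hN ha k).le)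
  rw [← sum_range_reflect (fun k => (sqGap N k + a)⁻¹)]
  refine sum_le_sum fun j hj => ?_
  have hj : j ≤ N := Nat.lt_succ_iff.mp (mem_range.mp hj)
  rw [show N + 1 - 1 - j = N - j by omega]
  exact inv_anti₀ (sqGap_add_pos hN ha _) (by linarith [sqGap_sub_le hj])

end gapSum

section lam

variable (N : ℕ) (y : ℝ) (k : ℕ)

lemma re_lam_sub_sq : (lam N y - (k : ℂ) ^ 2).re = (N : ℝ) ^ 2 + N - (k : ℝ) ^ 2 := by
  simp [lam, sq]

lemma im_lam_sub_sq : (lam N y - (k : ℂ) ^ 2).im = y := by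
  simp [lam, sq]

lemma sqGap_le_norm_lam_sub_sq : sqGap N k ≤ ‖lam N y - (k : ℂ) ^ 2‖ := by
  have h := Complex.abs_re_le_norm (lam N y - (k : ℂ) ^ 2)
  rwa [re_lam_sub_sq] at h

lemma abs_le_norm_lam_sub_sq : |y| ≤ ‖lam N y - (k : ℂ) ^ 2‖ := by
  have h := Complex.abs_im_le_norm (lam N y - (k : ℂ) ^ 2)
  rwa [im_lam_sub_sq] at h

lemma norm_lam_sub_sq_le : ‖lam N y - (k : ℂ) ^ 2‖ ≤ sqGap N k + |y| := by
  have h := Complex.norm_le_abs_re_add_abs_im (lam N y - (k : ℂ) ^ 2)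
  rwa [re_lam_sub_sq, im_lam_sub_sq] at h

lemma A_lam_one : A (lam N y) 1 = ∑' k : ℕ, ‖lam N y - (k : ℂ) ^ 2‖⁻¹ := by
  simp [A]

variable {N y} (hN : 0 < N)
include hN

lemma norm_lam_sub_sq_pos : 0 < ‖lam N y - (k : ℂ) ^ 2‖ := by
  have : (0 : ℝ) < N := by exact_mod_cast hN
  linarith [le_sqGap N k, sqGap_le_norm_lam_sub_sq N y k]

lemma inv_norm_lam_sub_sq_le : ‖lam N y - (k : ℂ) ^ 2‖⁻¹ ≤ 2 * (sqGap N k + |y|)⁻¹ := by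
  have hpos := sqGap_add_pos hN (abs_nonneg y) k
  rw [← div_eq_mul_inv, le_div_iff₀ hpos, inv_mul_le_iff₀ (norm_lam_sub_sq_pos k hN)]
  linarith [sqGap_le_norm_lam_sub_sq N y k, abs_le_norm_lam_sub_sq N y k]

lemma summable_inv_norm_lam_sub_sq : Summable fun k : ℕ => ‖lam N y - (k : ℂ) ^ 2‖⁻¹ :=
  ((summable_inv_sqGap_add hN (abs_nonneg y)).mul_left 2).of_nonneg_of_le
    (fun _ => by positivity) (inv_norm_lam_sub_sq_le · hN)

lemma gapSum_le_A_lam : gapSum N |y| ≤ A (lam N y) 1 := by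
  rw [A_lam_one]
  exact (summable_inv_sqGap_add hN (abs_nonneg y)).tsum_le_tsum
    (fun k => inv_anti₀ (norm_lam_sub_sq_pos k hN) (norm_lam_sub_sq_le N y k))
    (summable_inv_norm_lam_sub_sq hN)

lemma A_lam_le_two_mul_gapSum : A (lam N y) 1 ≤ 2 * gapSum N |y| := by
  rw [A_lam_one, gapSum, ← tsum_mul_left]
  exact (summable_inv_norm_lam_sub_sq hN).tsum_le_tsum (inv_norm_lam_sub_sq_le · hN)
    ((summable_inv_sqGap_add hN (abs_nonneg y)).mul_left 2)

end lam

section estimates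

variable {N : ℕ} {a : ℝ}

lemma gapSum_le_log_div (hN : 2 ≤ N) (ha : 0 ≤ a) : gapSum N a ≤ 10 * log N / N := by
  have hNr : (2 : ℝ) ≤ N := by exact_mod_cast hN
  have hL := one_half_le_log hNr
  have hlog : log ((N + 1 : ℕ) : ℝ) ≤ 2 * log N :=
    log_le_two_mul_log (by positivity) (by push_cast; nlinarith)
  have hH : ∑ j ∈ range (N + 1), (N * (j + 1 : ℝ) + a)⁻¹ ≤ (N : ℝ)⁻¹ * (1 + 2 * log N) :=
    (sum_range_inv_mul_succ_add_le (by positivity) ha _).trans (by gcongr)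
  have htail : ((N + 1 : ℕ) : ℝ)⁻¹ ≤ (N : ℝ)⁻¹ := by gcongr; omega
  have := gapSum_le (N := N) (by omega) ha (N + 1) (Nat.succ_pos N)
  rw [div_eq_mul_inv]
  nlinarith [inv_nonneg.mpr (Nat.cast_nonneg (α := ℝ) N)]

lemma log_div_le_gapSum (hN : 0 < N) (ha : 0 ≤ a) (haN : a ≤ N) :
    1 / 4 * log N / N ≤ gapSum N a := by
  have hNr : (1 : ℝ) ≤ N := by exact_mod_cast hN
  have hlog : log N ≤ log (((N + 1 : ℕ) : ℝ) + 1) :=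
    log_le_log (by positivity) (by push_cast; linarith)
  calc 1 / 4 * log N / N = (4 * N : ℝ)⁻¹ * log N := by ring
    _ ≤ (4 * N : ℝ)⁻¹ * log (((N + 1 : ℕ) : ℝ) + 1) := by gcongr
    _ = (4 * N : ℝ)⁻¹ * log ((4 * N * ((N + 1 : ℕ) + 1) + 0) / (4 * N + 0)) := by
        rw [add_zero, add_zero, mul_div_cancel_left₀ _ (by positivity)]
    _ ≤ ∑ j ∈ range (N + 1), (4 * N * (j + 1 : ℝ) + 0)⁻¹ :=
        log_le_sum_range_inv_mul_succ_add (by positivity) le_rfl _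
    _ ≤ ∑ j ∈ range (N + 1), (2 * N * (j + 1 : ℝ) + a)⁻¹ := by
        refine sum_le_sum fun j _ => inv_anti₀ (by positivity) ?_
        nlinarith [Nat.cast_nonneg (α := ℝ) j]
    _ ≤ gapSum N a := sum_range_inv_two_mul_add_le_gapSum hN ha

lemma log_one_add_div_le_gapSum (hN : 0 < N) (haN : N ≤ a) :
    1 / 4 * (1 / N) * log (1 + N ^ 2 / a) ≤ gapSum N a := by
  have hNr : (1 : ℝ) ≤ N := by exact_mod_cast hN
  have ha : 0 < a := by linarith
  set q := (2 * N * ((N + 1 : ℕ) + 1) + a) / (2 * N + a) with hq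
  have hq_sq : 1 + N ^ 2 / a ≤ q ^ 2 := by
    rw [hq, div_pow, one_add_div ha.ne', div_le_div_iff₀ ha (by positivity)]
    push_cast
    have h1 : (N : ℝ) ^ 4 ≤ a * N ^ 4 := le_mul_of_one_le_left (by positivity) (hNr.trans haN)
    have h2 : 0 ≤ a ^ 2 * (3 * N ^ 2 + 4 * N) + a * (12 * N ^ 3 + 12 * N ^ 2) := by positivity
    nlinarith
  have hlog : log (1 + N ^ 2 / a) ≤ 2 * log q := log_le_two_mul_log (by positivity) hq_sq
  calc 1 / 4 * (1 / N) * log (1 + N ^ 2 / a)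
      = (2 * N : ℝ)⁻¹ * (log (1 + N ^ 2 / a) / 2) := by field_simp; ring
    _ ≤ (2 * N : ℝ)⁻¹ * log q := by gcongr; linarith
    _ ≤ ∑ j ∈ range (N + 1), (2 * N * (j + 1 : ℝ) + a)⁻¹ :=
        log_le_sum_range_inv_mul_succ_add (by positivity) ha.le _
    _ ≤ gapSum N a := sum_range_inv_two_mul_add_le_gapSum hN ha.le

lemma gapSum_le_log_one_add_div (hN : 0 < N) (ha : 0 < a) (haN : a ≤ N ^ 2) :
    gapSum N a ≤ 6 * (1 / N) * log (1 + N ^ 2 / a) := by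
  have hNr : (1 : ℝ) ≤ N := by exact_mod_cast hN
  set L := log (1 + N ^ 2 / a)
  have hx : 1 ≤ (N : ℝ) ^ 2 / a := by rwa [one_le_div ha]
  have hL : 1 / 2 ≤ L := one_half_le_log (by linarith)
  have hH : ∑ j ∈ range (N + 1), (N * (j + 1 : ℝ) + a)⁻¹ ≤ (N : ℝ)⁻¹ * (2 * L) := by
    refine (sum_range_inv_mul_succ_add_le_log (by positivity) ha _).trans ?_
    gcongr
    refine log_le_two_mul_log (by positivity) ?_
    have hsplit : (N * ((N + 1 : ℕ) : ℝ) + a) / a = 1 + N ^ 2 / a + N / a := by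
      push_cast; field_simp; ring
    have : (N : ℝ) / a ≤ N ^ 2 / a := by gcongr; nlinarith
    nlinarith
  have htail : ((N + 1 : ℕ) : ℝ)⁻¹ ≤ (N : ℝ)⁻¹ := by gcongr; omega
  have := gapSum_le hN ha.le (N + 1) (Nat.succ_pos N)
  rw [one_div]
  nlinarith [mul_le_mul_of_nonneg_left hL (inv_nonneg.mpr (Nat.cast_nonneg (α := ℝ) N))]

lemma div_sqrt_le_gapSum (hN : 0 < N) (haN : (N : ℝ) ^ 2 ≤ a) : 1 / 3 / √a ≤ gapSum N a := by
  have hNr : (1 : ℝ) ≤ N := by exact_mod_cast hN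
  have ha : 0 < a := by nlinarith
  have hs : 0 < √a := sqrt_pos.mpr ha
  set m := ⌊√a⌋₊
  have hterm (k : ℕ) (hk : k ∈ range (m + 1)) : (3 * a)⁻¹ ≤ (sqGap N k + a)⁻¹ := by
    have hkm : (k : ℝ) ≤ √a :=
      (Nat.cast_le.mpr (Nat.lt_succ_iff.mp (mem_range.mp hk))).trans (Nat.floor_le hs.le)
    have hka : (k : ℝ) ^ 2 ≤ a := by
      calc (k : ℝ) ^ 2 ≤ √a ^ 2 := by gcongr
        _ = a := sq_sqrt ha.le
    exact inv_anti₀ (sqGap_add_pos hN ha.le k)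
      (by linarith [sqGap_le (N := N) (by nlinarith) hka])
  calc 1 / 3 / √a = √a / (3 * a) := by
        field_simp
        rw [sq_sqrt ha.le]
    _ ≤ (m + 1 : ℕ) * (3 * a)⁻¹ := by
        rw [div_eq_mul_inv]
        gcongr
        push_cast
        exact (Nat.lt_floor_add_one _).le
    _ = ∑ k ∈ range (m + 1), (3 * a)⁻¹ := by simp
    _ ≤ ∑ k ∈ range (m + 1), (sqGap N k + a)⁻¹ := sum_le_sum hterm
    _ ≤ gapSum N a := (summable_inv_sqGap_add hN ha.le).sum_le_tsum _
        fun k _ => inv_nonneg.mpr (sqGap_add_pos hN ha.le k).le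

lemma gapSum_le_div_sqrt (hN : 2 ≤ N) (haN : (N : ℝ) ^ 2 ≤ a) : gapSum N a ≤ 5 / √a := by
  have hNr : (2 : ℝ) ≤ N := by exact_mod_cast hN
  have ha : 0 < a := by nlinarith
  set s := √a
  have hs : 0 < s := sqrt_pos.mpr ha
  have has : a = s ^ 2 := (sq_sqrt ha.le).symm
  have hNs : (N : ℝ) ≤ s := by nlinarith
  set m := ⌊s⌋₊
  have hm_le : (m : ℝ) ≤ s := Nat.floor_le hs.le
  have hm_gt : s < m + 1 := Nat.lt_floor_add_one s
  have hm : 0 < m := Nat.floor_pos.mpr (by linarith)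
  have hsum (n : ℕ) : ∑ j ∈ range n, (N * (j + 1 : ℝ) + a)⁻¹ ≤ n * a⁻¹ := by
    calc ∑ j ∈ range n, (N * (j + 1 : ℝ) + a)⁻¹ ≤ ∑ j ∈ range n, a⁻¹ :=
          sum_le_sum fun j _ => inv_anti₀ ha (le_add_of_nonneg_left (by positivity))
      _ = n * a⁻¹ := by simp
  have hhead : ((N + 1 : ℕ) + m : ℝ) * a⁻¹ ≤ 3 / s := by
    rw [has, ← div_eq_mul_inv, div_le_div_iff₀ (by positivity) hs]
    push_cast
    nlinarith
  have htail : (m : ℝ)⁻¹ ≤ 2 / s := by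
    rw [inv_eq_one_div, div_le_div_iff₀ (by exact_mod_cast hm) hs]
    linarith
  have := gapSum_le (N := N) (by omega) ha.le m hm
  linarith [hsum (N + 1), hsum m, show 3 / s + 2 / s = 5 / s by ring]

end estimates

theorem stmt3 :
    ∃ c C : ℝ, 0 < c ∧ 0 < C ∧ ∀ N : ℕ, 2 ≤ N → ∀ y : ℝ,
      (|y| ≤ (N : ℝ) →
        c * Real.log N / N ≤ A (lam N y) 1 ∧ A (lam N y) 1 ≤ C * Real.log N / N) ∧
      ((N : ℝ) ≤ |y| ∧ |y| ≤ (N : ℝ) ^ 2 →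
        c * (1 / N) * Real.log (1 + (N : ℝ) ^ 2 / |y|) ≤ A (lam N y) 1 ∧
        A (lam N y) 1 ≤ C * (1 / N) * Real.log (1 + (N : ℝ) ^ 2 / |y|)) ∧
      ((N : ℝ) ^ 2 ≤ |y| →
        c / Real.sqrt |y| ≤ A (lam N y) 1 ∧ A (lam N y) 1 ≤ C / Real.sqrt |y|) := by
  refine ⟨1 / 4, 20, by norm_num, by norm_num, fun N hN y => ?_⟩
  have hN0 : 0 < N := by omega
  have hNr : (2 : ℝ) ≤ N := by exact_mod_cast hN
  have hA := gapSum_le_A_lam (y := y) hN0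
  have hA' := A_lam_le_two_mul_gapSum (y := y) hN0
  refine ⟨fun hy => ⟨?_, ?_⟩, fun ⟨hy₁, hy₂⟩ => ⟨?_, ?_⟩, fun hy => ⟨?_, ?_⟩⟩
  · linarith [log_div_le_gapSum hN0 (abs_nonneg y) hy]
  · linarith [gapSum_le_log_div hN (abs_nonneg y),
      show 2 * (10 * log N / N) = 20 * log N / N by ring]
  · linarith [log_one_add_div_le_gapSum hN0 hy₁]
  · linarith [gapSum_le_log_one_add_div hN0 (by linarith) hy₂]
  · have : 1 / 4 / √|y| ≤ 1 / 3 / √|y| := by gcongr; norm_num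
    linarith [div_sqrt_le_gapSum hN0 hy]
  · have : 2 * (5 / √|y|) ≤ 20 / √|y| := by rw [← mul_div_assoc]; gcongr; norm_num
    linarith [gapSum_le_div_sqrt hN hy]
end

section
/- There exists a constant C > 0 such that for every integer N ≥ 2, ∫_{−∞}^{∞} A(N² + N + iy, 1)³ dy ≤ C/N. -/
open MeasureTheory

/-!
Write `λ - k² = a_k + iy` with `a_k = N² + N - k²`, so that `A(λ, 1) = ∑ₖ |a_k + iy|⁻¹`.
Minkowski's inequality in `L³(dy)` bounds the `L³` norm of `y ↦ A(λ, 1)` by the sum of the `L³`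
norms of the terms, and `∫ |a + iy|⁻³ dy ≤ |a|⁻¹ ∫ (a² + y²)⁻¹ dy = π / a²`, so this norm is
`≲ ∑ₖ |a_k|^(-2/3)`. Since `|a_k| ≳ (j + 1)(j + N)` with `j = |k - N|`, and
`∑ⱼ ((j + 1)(j + N))^(-2/3) ≲ N^(-1/3)` (split at `j = N` and compare both halves with
telescoping sums of cube roots), cubing gives `∫ A(λ, 1)³ dy ≲ 1 / N`.
-/

open Finset Real
open scoped ENNReal

theorem ENNReal.iSup_rpow_of_pos {ι : Sort*} (g : ι → ℝ≥0∞) {r : ℝ} (hr : 0 < r) :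
    (⨆ i, g i) ^ r = ⨆ i, g i ^ r :=
  (ENNReal.orderIsoRpow r hr).map_iSup g

theorem eLpNorm'_iSup_of_monotone {α : Type*} [MeasurableSpace α] {μ : Measure α} {q : ℝ}
    (hq : 0 < q) {F : ℕ → α → ℝ≥0∞} (hF : ∀ n, AEMeasurable (F n) μ) (h_mono : Monotone F) :
    eLpNorm' (⨆ n, F n) q μ = ⨆ n, eLpNorm' (F n) q μ := by
  simp only [eLpNorm', enorm_eq_self, iSup_apply, ENNReal.iSup_rpow_of_pos _ hq]
  rw [lintegral_iSup' (fun n => (hF n).pow_const q)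
    (.of_forall fun y m n hmn => ENNReal.rpow_le_rpow (h_mono hmn y) hq.le),
    ENNReal.iSup_rpow_of_pos _ (by positivity)]

theorem eLpNorm'_tsum_le {α : Type*} [MeasurableSpace α] {μ : Measure α} {q : ℝ} (hq : 1 ≤ q)
    {f : ℕ → α → ℝ≥0∞} (hf : ∀ k, AEMeasurable (f k) μ) :
    eLpNorm' (∑' k, f k) q μ ≤ ∑' k, eLpNorm' (f k) q μ := by
  have h_tsum : ∑' k, f k = ⨆ n, ∑ k ∈ range n, f k := by
    ext y
    simp only [tsum_apply (Pi.summable.2 fun _ => ENNReal.summable), iSup_apply, Finset.sum_apply,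
      ENNReal.tsum_eq_iSup_nat]
  rw [h_tsum, eLpNorm'_iSup_of_monotone (by linarith)
    (fun n => Finset.aemeasurable_sum _ fun k _ => hf k)
    (fun m n hmn => Finset.sum_le_sum_of_subset (range_subset_range.2 hmn))]
  exact iSup_le fun n => (eLpNorm'_sum_le (fun k _ => (hf k).aestronglyMeasurable) hq).trans
    (ENNReal.sum_le_tsum _)

theorem integral_pow_le_of_eLpNorm'_le {α : Type*} [MeasurableSpace α] {μ : Measure α}
    {f : α → ℝ} {n : ℕ} (hn : n ≠ 0) {B : ℝ} (hB : 0 ≤ B)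
    (h : eLpNorm' f n μ ≤ ENNReal.ofReal B) :
    ∫ x, f x ^ n ∂μ ≤ B ^ n := by
  have h_lint : ∫⁻ x, ‖f x ^ n‖ₑ ∂μ ≤ ENNReal.ofReal (B ^ n) := by
    have hn' : (0 : ℝ) < n := by positivity
    calc ∫⁻ x, ‖f x ^ n‖ₑ ∂μ = eLpNorm' f n μ ^ (n : ℝ) := by
          simp only [eLpNorm', enorm_pow, ← ENNReal.rpow_mul, one_div, inv_mul_cancel₀ hn'.ne',
            ENNReal.rpow_one, ← ENNReal.rpow_natCast]
      _ ≤ ENNReal.ofReal B ^ (n : ℝ) := by gcongr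
      _ = ENNReal.ofReal (B ^ n) := by rw [ENNReal.rpow_natCast, ENNReal.ofReal_pow hB]
  calc ∫ x, f x ^ n ∂μ ≤ ‖∫ x, f x ^ n ∂μ‖ := le_norm_self _
    _ = (‖∫ x, f x ^ n ∂μ‖ₑ).toReal := (toReal_enorm _).symm
    _ ≤ B ^ n := ENNReal.toReal_le_of_le_ofReal (by positivity)
        ((enorm_integral_le_lintegral_enorm _).trans h_lint)

theorem inv_sq_add_sq_eq {a : ℝ} (ha : a ≠ 0) :
    (fun y : ℝ => (a ^ 2 + y ^ 2)⁻¹) = fun y => (a ^ 2)⁻¹ * (1 + (y / a) ^ 2)⁻¹ := by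
  ext y; field_simp

theorem integrable_inv_sq_add_sq {a : ℝ} (ha : a ≠ 0) :
    Integrable (fun y : ℝ => (a ^ 2 + y ^ 2)⁻¹) := by
  rw [inv_sq_add_sq_eq ha]
  exact (integrable_inv_one_add_sq.comp_div ha).const_mul _

theorem integral_univ_inv_sq_add_sq {a : ℝ} (ha : a ≠ 0) :
    ∫ y : ℝ, (a ^ 2 + y ^ 2)⁻¹ = π / |a| := by
  rw [inv_sq_add_sq_eq ha, integral_const_mul,
    Measure.integral_comp_div (fun y : ℝ => (1 + y ^ 2)⁻¹), integral_univ_inv_one_add_sq,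
    smul_eq_mul, ← sq_abs]
  field_simp

theorem lintegral_enorm_add_mul_I_inv_rpow_three_le {a : ℝ} (ha : a ≠ 0) :
    ∫⁻ y : ℝ, ‖(a : ℂ) + y * Complex.I‖ₑ⁻¹ ^ (3 : ℝ) ≤ ENNReal.ofReal (π / a ^ 2) := by
  have haa : 0 < |a| := abs_pos.2 ha
  calc ∫⁻ y : ℝ, ‖(a : ℂ) + y * Complex.I‖ₑ⁻¹ ^ (3 : ℝ)
      ≤ ∫⁻ y : ℝ, ENNReal.ofReal (|a|⁻¹ * (a ^ 2 + y ^ 2)⁻¹) := by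
        refine lintegral_mono fun y => ?_
        have hr : ‖(a : ℂ) + y * Complex.I‖ = √(a ^ 2 + y ^ 2) := Complex.norm_add_mul_I a y
        have hr_ge : |a| ≤ √(a ^ 2 + y ^ 2) := by
          rw [← sqrt_sq_eq_abs]; exact sqrt_le_sqrt (by nlinarith)
        rw [← ofReal_norm, hr, ← ENNReal.ofReal_inv_of_pos (haa.trans_le hr_ge),
          ENNReal.ofReal_rpow_of_nonneg (by positivity) (by norm_num)]
        refine ENNReal.ofReal_le_ofReal ?_
        rw [show (3 : ℝ) = (1 : ℕ) + (2 : ℕ) by norm_num, rpow_add' (by positivity) (by norm_num),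
          rpow_natCast, rpow_natCast, pow_one, inv_pow, sq_sqrt (by positivity)]
        gcongr
    _ = ENNReal.ofReal (π / a ^ 2) := by
        rw [← ofReal_integral_eq_lintegral_ofReal ((integrable_inv_sq_add_sq ha).const_mul _)
          (.of_forall fun y => by positivity), integral_const_mul, integral_univ_inv_sq_add_sq ha,
          ← sq_abs]
        congr 1
        field_simp

theorem eLpNorm'_enorm_add_mul_I_inv_le {a : ℝ} (ha : a ≠ 0) :
    eLpNorm' (fun y : ℝ => ‖(a : ℂ) + y * Complex.I‖ₑ⁻¹) 3 volume
      ≤ ENNReal.ofReal (π ^ (1 / 3 : ℝ) * |a| ^ (-(2 / 3) : ℝ)) := by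
  simp only [eLpNorm', enorm_eq_self]
  calc (∫⁻ y : ℝ, ‖(a : ℂ) + y * Complex.I‖ₑ⁻¹ ^ (3 : ℝ)) ^ (1 / 3 : ℝ)
      ≤ ENNReal.ofReal (π / a ^ 2) ^ (1 / 3 : ℝ) := by
        gcongr; exact lintegral_enorm_add_mul_I_inv_rpow_three_le ha
    _ = ENNReal.ofReal (π ^ (1 / 3 : ℝ) * |a| ^ (-(2 / 3) : ℝ)) := by
        rw [ENNReal.ofReal_rpow_of_nonneg (by positivity) (by norm_num), ← sq_abs,
          div_rpow pi_pos.le (by positivity), div_eq_mul_inv, ← rpow_natCast,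
          ← rpow_mul (abs_nonneg a), ← rpow_neg (abs_nonneg a)]
        norm_num

theorem one_le_three_mul_sub_mul_sq {a b : ℝ} (ha : 0 ≤ a) (hab : a ≤ b) (h : b ^ 3 = a ^ 3 + 1) :
    1 ≤ 3 * (b - a) * b ^ 2 := by
  nlinarith [sq_nonneg (b - a), mul_nonneg ha (sub_nonneg.2 hab),
    mul_nonneg (mul_nonneg ha ha) (sub_nonneg.2 hab)]

theorem rpow_one_third_pow_three {x : ℝ} (hx : 0 ≤ x) : (x ^ (1 / 3 : ℝ)) ^ 3 = x := by
  rw [← rpow_natCast, ← rpow_mul hx]; norm_num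

theorem add_one_rpow_neg_two_thirds_le {x : ℝ} (hx : 0 ≤ x) :
    (x + 1) ^ (-(2 / 3) : ℝ) ≤ 3 * ((x + 1) ^ (1 / 3 : ℝ) - x ^ (1 / 3 : ℝ)) := by
  set a := x ^ (1 / 3 : ℝ)
  set b := (x + 1) ^ (1 / 3 : ℝ)
  have hab : a ≤ b := rpow_le_rpow hx (by linarith) (by norm_num)
  have key := one_le_three_mul_sub_mul_sq (by positivity) hab
    (by rw [rpow_one_third_pow_three hx, rpow_one_third_pow_three (by linarith)])
  have : (x + 1) ^ (-(2 / 3) : ℝ) = (b ^ 2)⁻¹ := by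
    rw [← rpow_natCast, ← rpow_mul (by linarith), ← rpow_neg (by linarith)]; norm_num
  rw [this, inv_le_iff_one_le_mul₀ (by positivity)]
  linarith

theorem add_one_rpow_neg_four_thirds_le {x : ℝ} (hx : 0 < x) :
    (x + 1) ^ (-(4 / 3) : ℝ) ≤ 3 * (x ^ (-(1 / 3) : ℝ) - (x + 1) ^ (-(1 / 3) : ℝ)) := by
  rw [rpow_neg hx.le (1 / 3), rpow_neg (by linarith : (0 : ℝ) ≤ x + 1) (1 / 3)]
  set a := x ^ (1 / 3 : ℝ)
  set b := (x + 1) ^ (1 / 3 : ℝ)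
  have ha : 0 < a := by positivity
  have hb : 0 < b := by positivity
  have hab : a ≤ b := rpow_le_rpow hx.le (by linarith) (by norm_num)
  have key := one_le_three_mul_sub_mul_sq ha.le hab
    (by rw [rpow_one_third_pow_three hx.le, rpow_one_third_pow_three (by linarith)])
  have h4 : (x + 1) ^ (-(4 / 3) : ℝ) = (b ^ 4)⁻¹ := by
    rw [← rpow_natCast, ← rpow_mul (by linarith), ← rpow_neg (by linarith)]; norm_num
  rw [h4, inv_le_iff_one_le_mul₀ (by positivity)]
  have : 3 * (a⁻¹ - b⁻¹) * b ^ 4 = 3 * (b - a) * b ^ 2 * (b / a) := by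
    field_simp
  rw [this]
  nlinarith [(one_le_div ha).2 hab]

theorem sum_range_rpow_neg_two_thirds_le (n : ℕ) :
    ∑ m ∈ range n, ((m : ℝ) + 1) ^ (-(2 / 3) : ℝ) ≤ 3 * (n : ℝ) ^ (1 / 3 : ℝ) := by
  calc ∑ m ∈ range n, ((m : ℝ) + 1) ^ (-(2 / 3) : ℝ)
      ≤ ∑ m ∈ range n, 3 * (((m + 1 : ℕ) : ℝ) ^ (1 / 3 : ℝ) - (m : ℝ) ^ (1 / 3 : ℝ)) :=
        sum_le_sum fun m _ => by push_cast; exact add_one_rpow_neg_two_thirds_le m.cast_nonneg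
    _ = 3 * (n : ℝ) ^ (1 / 3 : ℝ) := by
        rw [← mul_sum, sum_range_sub (fun m : ℕ => (m : ℝ) ^ (1 / 3 : ℝ))]; norm_num

theorem sum_range_add_rpow_neg_four_thirds_le {N : ℕ} (hN : 1 ≤ N) (n : ℕ) :
    ∑ i ∈ range n, ((N + i : ℕ) + 1 : ℝ) ^ (-(4 / 3) : ℝ) ≤ 3 * (N : ℝ) ^ (-(1 / 3) : ℝ) := by
  have hN' : (0 : ℝ) < N := by exact_mod_cast hN
  calc ∑ i ∈ range n, ((N + i : ℕ) + 1 : ℝ) ^ (-(4 / 3) : ℝ)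
      ≤ ∑ i ∈ range n, 3 * (((N + i : ℕ) : ℝ) ^ (-(1 / 3) : ℝ)
          - ((N + (i + 1) : ℕ) : ℝ) ^ (-(1 / 3) : ℝ)) :=
        sum_le_sum fun i _ => by
          rw [← add_assoc, Nat.cast_succ (N + i)]
          exact add_one_rpow_neg_four_thirds_le (by positivity)
    _ = 3 * ((N : ℝ) ^ (-(1 / 3) : ℝ) - ((N + n : ℕ) : ℝ) ^ (-(1 / 3) : ℝ)) := by
        rw [← mul_sum, sum_range_sub' (fun i : ℕ => ((N + i : ℕ) : ℝ) ^ (-(1 / 3) : ℝ))]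
        simp
    _ ≤ 3 * (N : ℝ) ^ (-(1 / 3) : ℝ) := by
        have : 0 ≤ ((N + n : ℕ) : ℝ) ^ (-(1 / 3) : ℝ) := by positivity
        linarith

theorem tsum_ofReal_add_one_mul_add_rpow_neg_two_thirds_le {N : ℕ} (hN : 1 ≤ N) :
    ∑' m : ℕ, ENNReal.ofReal ((((m : ℝ) + 1) * (m + N)) ^ (-(2 / 3) : ℝ))
      ≤ ENNReal.ofReal (6 * (N : ℝ) ^ (-(1 / 3) : ℝ)) := by
  have hN1 : (1 : ℝ) ≤ N := by exact_mod_cast hN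
  have hN' : (0 : ℝ) < N := by linarith
  rw [← ENNReal.summable.sum_add_tsum_nat_add' (k := N), ← ENNReal.ofReal_sum_of_nonneg
    (fun m _ => by positivity), show (6 : ℝ) = 3 + 3 by norm_num, add_mul,
    ENNReal.ofReal_add (by positivity) (by positivity)]
  gcongr
  · calc ∑ m ∈ range N, (((m : ℝ) + 1) * (m + N)) ^ (-(2 / 3) : ℝ)
        ≤ ∑ m ∈ range N, (N : ℝ) ^ (-(2 / 3) : ℝ) * ((m : ℝ) + 1) ^ (-(2 / 3) : ℝ) :=
          sum_le_sum fun m _ => by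
            rw [← mul_rpow hN'.le (by positivity), mul_comm]
            exact rpow_le_rpow_of_nonpos (by positivity) (by gcongr; linarith) (by norm_num)
      _ ≤ (N : ℝ) ^ (-(2 / 3) : ℝ) * (3 * (N : ℝ) ^ (1 / 3 : ℝ)) := by
          rw [← mul_sum]; gcongr; exact sum_range_rpow_neg_two_thirds_le N
      _ = 3 * (N : ℝ) ^ (-(1 / 3) : ℝ) := by
          rw [mul_left_comm, ← rpow_add hN']; norm_num
  · refine ENNReal.tsum_le_of_sum_range_le fun n => ?_
    rw [← ENNReal.ofReal_sum_of_nonneg (fun m _ => by positivity)]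
    refine ENNReal.ofReal_le_ofReal ((sum_le_sum fun i _ => ?_).trans
      (sum_range_add_rpow_neg_four_thirds_le hN n))
    rw [show (-(4 / 3) : ℝ) = (2 : ℕ) * (-(2 / 3)) by norm_num, rpow_mul (by positivity),
      rpow_natCast]
    refine rpow_le_rpow_of_nonpos (by positivity) ?_ (by norm_num)
    push_cast
    nlinarith [mul_nonneg (by positivity : (0 : ℝ) ≤ N + i + 1) (sub_nonneg.2 hN1)]

theorem ENNReal.tsum_natAbs_sub_le (ψ : ℕ → ℝ≥0∞) (N : ℤ) :
    ∑' k : ℕ, ψ ((k : ℤ) - N).natAbs ≤ 2 * ∑' m, ψ m :=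
  calc ∑' k : ℕ, ψ ((k : ℤ) - N).natAbs
      ≤ ∑' j : ℤ, ψ j.natAbs :=
        ENNReal.tsum_comp_le_tsum_of_injective (fun _ _ h => by simpa using h) (ψ ∘ Int.natAbs)
    _ = ∑' m : ℕ, ψ m + ∑' m : ℕ, ψ (m + 1) := by
        rw [tsum_of_nat_of_neg_add_one ENNReal.summable ENNReal.summable]
        simp only [Int.natAbs_natCast, Int.natAbs_neg]
        rfl
    _ ≤ 2 * ∑' m, ψ m := by
        rw [two_mul]
        exact add_le_add le_rfl (ENNReal.tsum_comp_le_tsum_of_injective Nat.succ_injective ψ)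

theorem le_abs_sq_add_self_sub_sq (N k : ℕ) :
    (|(k : ℝ) - N| + 1) * (|(k : ℝ) - N| + N) / 8 ≤ |(N : ℝ) ^ 2 + N - k ^ 2| := by
  rcases le_or_gt k N with hk | hk
  · have hk' : (k : ℝ) ≤ N := by exact_mod_cast hk
    rw [abs_of_nonpos (by linarith), abs_of_nonneg (by nlinarith)]
    nlinarith
  · have hk' : (N : ℝ) + 1 ≤ k := by exact_mod_cast hk
    rw [abs_of_nonneg (by linarith), abs_of_nonpos (by nlinarith)]
    nlinarith

theorem tsum_ofReal_abs_sq_add_self_sub_sq_rpow_le {N : ℕ} (hN : 1 ≤ N) :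
    ∑' k : ℕ, ENNReal.ofReal (|(N : ℝ) ^ 2 + N - k ^ 2| ^ (-(2 / 3) : ℝ))
      ≤ ENNReal.ofReal (48 * (N : ℝ) ^ (-(1 / 3) : ℝ)) := by
  have hN' : (0 : ℝ) < N := by exact_mod_cast hN
  set ψ : ℕ → ℝ≥0∞ := fun m => ENNReal.ofReal ((((m : ℝ) + 1) * (m + N)) ^ (-(2 / 3) : ℝ))
  calc ∑' k : ℕ, ENNReal.ofReal (|(N : ℝ) ^ 2 + N - k ^ 2| ^ (-(2 / 3) : ℝ))
      ≤ ∑' k : ℕ, ENNReal.ofReal 4 * ψ ((k : ℤ) - N).natAbs := by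
        gcongr with k
        rw [← ENNReal.ofReal_mul (by norm_num)]
        refine ENNReal.ofReal_le_ofReal ?_
        have hj : ((((k : ℤ) - N).natAbs : ℕ) : ℝ) = |(k : ℝ) - N| := by
          rw [Nat.cast_natAbs]; push_cast; rfl
        rw [hj]
        calc |(N : ℝ) ^ 2 + N - k ^ 2| ^ (-(2 / 3) : ℝ)
            ≤ ((|(k : ℝ) - N| + 1) * (|(k : ℝ) - N| + N) / 8) ^ (-(2 / 3) : ℝ) :=
              rpow_le_rpow_of_nonpos (by positivity) (le_abs_sq_add_self_sub_sq N k) (by norm_num)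
          _ = 4 * ((|(k : ℝ) - N| + 1) * (|(k : ℝ) - N| + N)) ^ (-(2 / 3) : ℝ) := by
              rw [div_rpow (by positivity) (by norm_num), div_eq_mul_inv, mul_comm,
                ← rpow_neg (by norm_num), neg_neg, show (8 : ℝ) = 2 ^ (3 : ℕ) by norm_num,
                ← rpow_natCast, ← rpow_mul (by norm_num)]
              norm_num
    _ ≤ ENNReal.ofReal 4 * (2 * ∑' m, ψ m) := by
        rw [ENNReal.tsum_mul_left]
        gcongr
        exact ENNReal.tsum_natAbs_sub_le ψ N
    _ ≤ ENNReal.ofReal 4 * (2 * ENNReal.ofReal (6 * (N : ℝ) ^ (-(1 / 3) : ℝ))) := by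
        gcongr
        exact tsum_ofReal_add_one_mul_add_rpow_neg_two_thirds_le hN
    _ = ENNReal.ofReal (48 * (N : ℝ) ^ (-(1 / 3) : ℝ)) := by
        rw [← ENNReal.ofReal_ofNat 2, ← ENNReal.ofReal_mul (by norm_num),
          ← ENNReal.ofReal_mul (by norm_num)]
        ring_nf

theorem enorm_A_one_le (z : ℂ) : ‖A z 1‖ₑ ≤ ∑' k : ℕ, ‖z - (k : ℂ) ^ 2‖ₑ⁻¹ := by
  simp only [A, rpow_one, div_one]
  refine enorm_tsum_le_tsum_enorm.trans (ENNReal.tsum_le_tsum fun k => ?_)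
  rcases eq_or_ne (z - (k : ℂ) ^ 2) 0 with h | h
  · simp [h]
  · rw [one_div, enorm_inv (norm_ne_zero_iff.2 h), enorm_norm]

theorem lam_sub_sq (N k : ℕ) (y : ℝ) :
    lam N y - (k : ℂ) ^ 2 = (((N : ℝ) ^ 2 + N - k ^ 2 : ℝ) : ℂ) + y * Complex.I := by
  simp only [lam]; push_cast; ring

theorem eLpNorm'_A_lam_le {N : ℕ} (hN : 1 ≤ N) :
    eLpNorm' (fun y => A (lam N y) 1) 3 volume
      ≤ ENNReal.ofReal (48 * π ^ (1 / 3 : ℝ) * (N : ℝ) ^ (-(1 / 3) : ℝ)) := by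
  set G : ℕ → ℝ → ℝ≥0∞ := fun k y => ‖lam N y - (k : ℂ) ^ 2‖ₑ⁻¹
  have hG : ∀ k, AEMeasurable (G k) volume := fun k => by
    simp only [G, lam]; fun_prop
  have ha : ∀ k : ℕ, (N : ℝ) ^ 2 + N - k ^ 2 ≠ 0 := fun k =>
    abs_pos.1 ((by positivity : (0 : ℝ) < _).trans_le (le_abs_sq_add_self_sub_sq N k))
  calc eLpNorm' (fun y => A (lam N y) 1) 3 volume
      ≤ eLpNorm' (∑' k, G k) 3 volume := by
        refine eLpNorm'_mono_enorm_ae (by norm_num) (.of_forall fun y => ?_)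
        rw [tsum_apply (Pi.summable.2 fun _ => ENNReal.summable), enorm_eq_self]
        exact enorm_A_one_le _
    _ ≤ ∑' k, eLpNorm' (G k) 3 volume := eLpNorm'_tsum_le (by norm_num) hG
    _ ≤ ∑' k : ℕ, ENNReal.ofReal (π ^ (1 / 3 : ℝ)) *
          ENNReal.ofReal (|(N : ℝ) ^ 2 + N - k ^ 2| ^ (-(2 / 3) : ℝ)) := by
        gcongr with k
        rw [← ENNReal.ofReal_mul (by positivity)]
        simpa only [G, lam_sub_sq] using eLpNorm'_enorm_add_mul_I_inv_le (ha k)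
    _ ≤ ENNReal.ofReal (π ^ (1 / 3 : ℝ)) * ENNReal.ofReal (48 * (N : ℝ) ^ (-(1 / 3) : ℝ)) := by
        rw [ENNReal.tsum_mul_left]
        gcongr
        exact tsum_ofReal_abs_sq_add_self_sub_sq_rpow_le hN
    _ = ENNReal.ofReal (48 * π ^ (1 / 3 : ℝ) * (N : ℝ) ^ (-(1 / 3) : ℝ)) := by
        rw [← ENNReal.ofReal_mul (by positivity)]; ring_nf

theorem stmt6 :
    ∃ C : ℝ, 0 < C ∧ ∀ N : ℕ, 2 ≤ N →
      (∫ y : ℝ, A (lam N y) 1 ^ 3) ≤ C / N := by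
  refine ⟨48 ^ 3 * π, by positivity, fun N hN => ?_⟩
  have hN' : (0 : ℝ) < N := by positivity
  calc ∫ y : ℝ, A (lam N y) 1 ^ 3
      ≤ (48 * π ^ (1 / 3 : ℝ) * (N : ℝ) ^ (-(1 / 3) : ℝ)) ^ 3 :=
        integral_pow_le_of_eLpNorm'_le (by norm_num) (by positivity)
          (by exact_mod_cast eLpNorm'_A_lam_le (by omega))
    _ = 48 ^ 3 * π / N := by
        rw [mul_pow, mul_pow, ← rpow_natCast (π ^ _), ← rpow_natCast ((N : ℝ) ^ _),
          ← rpow_mul pi_pos.le, ← rpow_mul hN'.le]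
        norm_num [rpow_neg_one, div_eq_mul_inv]
end

section
/- For each integer N ≥ 0 let A_N = ∑_{k=0}^{N} ∑_{m=N+1}^{∞} 1/(m² − k²). Then A_N = π²/6 − (1/4) · ∑_{n=1}^{N} 1/n² for every N ≥ 0. In particular, the sequence (A_N) is strictly decreasing, A_N ≤ π²/6 for all N, and A_N → π²/8 as N → ∞. -/
/-!
Partial fractions, `1 / (m² - n²) = (1 / (m - n) - 1 / (m + n)) / (2n)`, express both the row
`∑_{m > n} 1 / (m² - n²)` (a telescoping series) and the column `∑_{k < n} 1 / (n² - k²)` through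
the harmonic number `H_{2n}`: the row is `H_{2n} / (2n)`, the column `H_{2n} / (2n) + 1 / (4n²)`.
Going from `A_N` to `A_{N+1}` removes the column `m = N + 1` and adds the row `k = N + 1`, so
`A_{N+1} = A_N - 1 / (4 (N + 1)²)`, while `A_0 = ζ(2) = π² / 6`.
-/

open Filter

/-- `A_N = ∑_{k=0}^{N} ∑_{m=N+1}^∞ 1/(m² − k²)`, where the inner sum is written with
`m = N + 1 + j`, `j : ℕ`. -/
noncomputable def ANseq (N : ℕ) : ℝ :=
  ∑ k ∈ Finset.range (N + 1),
    ∑' j : ℕ, 1 / (((N : ℝ) + 1 + j) ^ 2 - (k : ℝ) ^ 2)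

open Finset Real Topology

lemma hasSum_sub_add_of_antitone {f : ℕ → ℝ} (hf : Antitone f)
    (hf0 : Tendsto f atTop (𝓝 0)) (m : ℕ) :
    HasSum (fun j => f j - f (j + m)) (∑ i ∈ range m, f i) := by
  rw [hasSum_iff_tendsto_nat_of_nonneg fun j => sub_nonneg.2 (hf (Nat.le_add_right j m))]
  have hpartialSum : ∀ n, ∑ j ∈ range n, (f j - f (j + m))
      = ∑ i ∈ range m, f i - ∑ i ∈ range m, f (n + i) := fun n => by
    have h₁ := sum_range_add f n m
    have h₂ := sum_range_add f m n
    rw [add_comm m n] at h₂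
    simp only [sum_sub_distrib, add_comm _ m]
    linarith
  have hshift : Tendsto (fun n => ∑ i ∈ range m, f (n + i)) atTop (𝓝 0) := by
    simpa using tendsto_finsetSum (range m) fun i _ => hf0.comp (tendsto_add_atTop_nat i)
  simpa [hpartialSum] using tendsto_const_nhds.sub hshift

lemma hasSum_one_div_add_sq_sub_sq (n : ℕ) (hn : n ≠ 0) :
    HasSum (fun j : ℕ => 1 / (((n : ℝ) + 1 + j) ^ 2 - (n : ℝ) ^ 2))
      ((∑ i ∈ range (2 * n), 1 / ((i : ℝ) + 1)) / (2 * n)) := by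
  have hanti : Antitone fun i : ℕ => 1 / ((i : ℝ) + 1) := fun a b hab =>
    one_div_le_one_div_of_le (by positivity) (by gcongr)
  refine ((hasSum_sub_add_of_antitone hanti tendsto_one_div_add_atTop_nhds_zero_nat
    (2 * n)).div_const (2 * n)).congr_fun fun j => ?_
  have : (n : ℝ) ≠ 0 := by exact_mod_cast hn
  rw [show ((n : ℝ) + 1 + j) ^ 2 - (n : ℝ) ^ 2 = (j + 1) * (j + 1 + 2 * n) by ring]
  push_cast
  field_simp
  ring

lemma sum_one_div_sq_sub_sq (n : ℕ) (hn : n ≠ 0) :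
    ∑ k ∈ range n, 1 / ((n : ℝ) ^ 2 - (k : ℝ) ^ 2)
      = (∑ i ∈ range (2 * n), 1 / ((i : ℝ) + 1)) / (2 * n) + 1 / (4 * (n : ℝ) ^ 2) := by
  have hn' : (n : ℝ) ≠ 0 := by exact_mod_cast hn
  have hpartial : ∀ k ∈ range n, 1 / ((n : ℝ) ^ 2 - (k : ℝ) ^ 2)
      = (1 / ((n : ℝ) - k) + 1 / ((n : ℝ) + k)) / (2 * n) := fun k hk => by
    have hk : (k : ℝ) < n := by exact_mod_cast mem_range.1 hk
    have : (n : ℝ) + k ≠ 0 := by positivity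
    rw [show (n : ℝ) ^ 2 - (k : ℝ) ^ 2 = (n - k) * (n + k) by ring]
    field_simp [sub_ne_zero.2 hk.ne']
    ring
  have hlow : ∑ k ∈ range n, 1 / ((n : ℝ) - k) = ∑ k ∈ range n, 1 / ((k : ℝ) + 1) := by
    rw [← sum_range_reflect]
    refine sum_congr rfl fun k hk => ?_
    rw [Nat.cast_sub (by grind), Nat.cast_sub (by grind)]
    ring_nf
  have hhigh : ∑ k ∈ range n, 1 / ((n : ℝ) + k)
      = ∑ k ∈ range n, 1 / ((n : ℝ) + (k + 1 : ℕ)) + 1 / (2 * n) := by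
    have htel := sum_range_sub' (fun k : ℕ => 1 / ((n : ℝ) + k)) n
    simp only [Nat.cast_zero, add_zero, sum_sub_distrib] at htel
    have : 1 / (n : ℝ) - 1 / (n + n) = 1 / (2 * n) := by field_simp; ring
    linarith
  have hsplit : ∑ i ∈ range (2 * n), 1 / ((i : ℝ) + 1)
      = ∑ i ∈ range n, 1 / ((i : ℝ) + 1) + ∑ k ∈ range n, 1 / ((n : ℝ) + (k + 1 : ℕ)) := by
    rw [two_mul, sum_range_add]
    push_cast
    ring_nf
  rw [sum_congr rfl hpartial, ← sum_div, sum_add_distrib, hlow, hsplit, hhigh]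
  field_simp
  ring

theorem tsum_one_div_add_sq_sub_sq (n : ℕ) (hn : n ≠ 0) :
    ∑' j : ℕ, 1 / (((n : ℝ) + 1 + j) ^ 2 - (n : ℝ) ^ 2)
      = ∑ k ∈ range n, 1 / ((n : ℝ) ^ 2 - (k : ℝ) ^ 2) - 1 / (4 * (n : ℝ) ^ 2) := by
  rw [(hasSum_one_div_add_sq_sub_sq n hn).tsum_eq, sum_one_div_sq_sub_sq n hn,
    add_sub_cancel_right]

lemma summable_one_div_add_sq_sub_sq {x c : ℝ} (hc : 0 ≤ c) (hx : c + 1 ≤ x) :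
    Summable fun j : ℕ => 1 / ((x + j) ^ 2 - c ^ 2) := by
  have hbase : Summable fun j : ℕ => 1 / ((j : ℝ) + 1) ^ 2 := by
    simpa using (summable_nat_add_iff 1).2 (Real.summable_one_div_nat_pow.2 one_lt_two)
  have hle : ∀ j : ℕ, ((j : ℝ) + 1) ^ 2 ≤ (x + j) ^ 2 - c ^ 2 := fun j => by
    nlinarith [j.cast_nonneg (α := ℝ)]
  refine hbase.of_nonneg_of_le (fun j => one_div_nonneg.2 ?_)
    fun j => one_div_le_one_div_of_le (by positivity) (hle j)
  exact (sq_nonneg _).trans (hle j)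

lemma ANseq_zero : ANseq 0 = π ^ 2 / 6 := by
  rw [← hasSum_zeta_two.tsum_eq, hasSum_zeta_two.summable.tsum_eq_zero_add]
  simp [ANseq, add_comm]

lemma ANseq_succ (N : ℕ) : ANseq (N + 1) = ANseq N - 1 / (4 * ((N : ℝ) + 1) ^ 2) := by
  have hshift : ∀ k ∈ range (N + 1),
      ∑' j : ℕ, 1 / ((((N + 1 : ℕ) : ℝ) + 1 + j) ^ 2 - (k : ℝ) ^ 2)
        = ∑' j : ℕ, 1 / (((N : ℝ) + 1 + j) ^ 2 - (k : ℝ) ^ 2)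
          - 1 / (((N : ℝ) + 1) ^ 2 - (k : ℝ) ^ 2) := fun k hk => by
    have hk : (k : ℝ) ≤ N := by exact_mod_cast Nat.lt_succ_iff.1 (mem_range.1 hk)
    rw [(summable_one_div_add_sq_sub_sq (x := (N : ℝ) + 1) k.cast_nonneg
      (by linarith)).tsum_eq_zero_add]
    simp only [Nat.cast_zero, add_zero, add_sub_cancel_left]
    exact tsum_congr fun j => by push_cast; ring_nf
  rw [ANseq, sum_range_succ, sum_congr rfl hshift, sum_sub_distrib,
    tsum_one_div_add_sq_sub_sq (N + 1) N.succ_ne_zero, ANseq]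
  push_cast
  ring

theorem ANseq_eq (N : ℕ) :
    ANseq N = π ^ 2 / 6 - (1 / 4) * ∑ n ∈ Icc 1 N, (1 : ℝ) / (n : ℝ) ^ 2 := by
  induction N with
  | zero => simp [ANseq_zero]
  | succ N ih =>
    rw [ANseq_succ, ih, sum_Icc_succ_top (by omega)]
    push_cast
    field_simp
    ring

lemma tendsto_sum_Icc_one_div_sq :
    Tendsto (fun N : ℕ => ∑ n ∈ Icc 1 N, (1 : ℝ) / (n : ℝ) ^ 2) atTop (𝓝 (π ^ 2 / 6)) := by
  have hIcc : ∀ N : ℕ, ∑ n ∈ Icc 1 N, (1 : ℝ) / (n : ℝ) ^ 2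
      = ∑ n ∈ range (N + 1), (1 : ℝ) / (n : ℝ) ^ 2 := fun N => by
    rw [range_eq_Ico, sum_eq_sum_Ico_succ_bot N.succ_pos, Nat.succ_eq_add_one, zero_add,
      Ico_add_one_right_eq_Icc]
    simp
  simp only [hIcc]
  exact hasSum_zeta_two.tendsto_sum_nat.comp (tendsto_add_atTop_nat 1)

theorem stmt7 :
    (∀ N : ℕ, ANseq N =
      Real.pi ^ 2 / 6 - (1 / 4) * ∑ n ∈ Finset.Icc 1 N, (1 : ℝ) / (n : ℝ) ^ 2) ∧
    StrictAnti ANseq ∧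
    (∀ N : ℕ, ANseq N ≤ Real.pi ^ 2 / 6) ∧
    Tendsto ANseq atTop (nhds (Real.pi ^ 2 / 8)) := by
  refine ⟨ANseq_eq, strictAnti_nat_of_succ_lt fun N => ?_, fun N => ?_, ?_⟩
  · rw [ANseq_succ]
    linarith [show (0 : ℝ) < 1 / (4 * ((N : ℝ) + 1) ^ 2) by positivity]
  · rw [ANseq_eq]
    linarith [sum_nonneg fun n (_ : n ∈ Icc 1 N) => one_div_nonneg.2 (sq_nonneg (n : ℝ))]
  · rw [funext ANseq_eq]
    convert tendsto_const_nhds.sub (tendsto_sum_Icc_one_div_sq.const_mul (1 / 4)) using 2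
    ring
end

section
/- For all integers H, N with 0 < H < N, the sum σ(N, H) = ∑ 1/(m² − k²), taken over all pairs of integers (k, m) with 0 ≤ k ≤ N, m ≥ N + 1, and m − k ≤ H, satisfies σ(N, H) ≤ H/N. -/
/-! Group the pairs `(k, m)` by the difference `d = m - k ∈ [1, H]`. For fixed `d` there are at most
`d` admissible `k`, and each term satisfies `m² - k² = d (k + m) ≥ d (N + 1)`, so every class
contributes at most `1 / (N + 1)`. Hence the whole sum is at most `H / (N + 1) ≤ H / N`. -/

open Finset

theorem sum_range_sum_Icc_eq_sum_Icc_sum_Icc {M : Type*} [AddCommMonoid M] (f : ℕ → ℕ → M)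
    (N H : ℕ) :
    ∑ k ∈ range (N + 1), ∑ m ∈ Icc (N + 1) (k + H), f k m
      = ∑ d ∈ Icc 1 H, ∑ k ∈ Icc (N + 1 - d) N, f k (k + d) := by
  have shift : ∀ k ∈ range (N + 1),
      ∑ m ∈ Icc (N + 1) (k + H), f k m = ∑ d ∈ Icc (N + 1 - k) H, f k (k + d) := by
    intro k hk
    have hk : k ≤ N := Nat.lt_succ_iff.mp (mem_range.mp hk)
    have : Icc (N + 1) (k + H) = (Icc (N + 1 - k) H).map (addLeftEmbedding k) := by
      rw [map_add_left_Icc]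
      congr 1
      omega
    rw [this, sum_map]
    rfl
  rw [sum_congr rfl shift]
  exact sum_comm' (by intro k d; simp only [mem_range, mem_Icc]; omega)

theorem one_div_sq_sub_sq_le {k d N : ℕ} (hd : 0 < d) (h : N + 1 ≤ k + d) :
    1 / (((k + d : ℕ) : ℝ) ^ 2 - (k : ℝ) ^ 2) ≤ 1 / (d * (N + 1)) := by
  have hdiff : ((k + d : ℕ) : ℝ) ^ 2 - (k : ℝ) ^ 2 = d * (k + (k + d)) := by push_cast; ring
  have h' : (N : ℝ) + 1 ≤ k + d := by exact_mod_cast h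
  rw [hdiff]
  refine one_div_le_one_div_of_le (by positivity) (mul_le_mul_of_nonneg_left ?_ d.cast_nonneg)
  linarith [(k.cast_nonneg : (0 : ℝ) ≤ k)]

theorem sum_Icc_one_div_sq_sub_sq_le (N : ℕ) {d : ℕ} (hd : 0 < d) :
    ∑ k ∈ Icc (N + 1 - d) N, 1 / (((k + d : ℕ) : ℝ) ^ 2 - (k : ℝ) ^ 2) ≤ 1 / ((N : ℝ) + 1) := by
  have hcard : ((Icc (N + 1 - d) N).card : ℝ) ≤ d := by
    rw [Nat.card_Icc]
    exact_mod_cast (by omega)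
  have hd' : (0 : ℝ) < d := by exact_mod_cast hd
  calc ∑ k ∈ Icc (N + 1 - d) N, 1 / (((k + d : ℕ) : ℝ) ^ 2 - (k : ℝ) ^ 2)
      ≤ ∑ _k ∈ Icc (N + 1 - d) N, 1 / ((d : ℝ) * (N + 1)) :=
        sum_le_sum fun k hk ↦ one_div_sq_sub_sq_le hd (by simp only [mem_Icc] at hk; omega)
    _ = (Icc (N + 1 - d) N).card * (1 / ((d : ℝ) * (N + 1))) := by
        rw [sum_const, nsmul_eq_mul]
    _ ≤ d * (1 / ((d : ℝ) * (N + 1))) := by gcongr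
    _ = 1 / (N + 1) := by field_simp

theorem sum_one_div_sq_sub_sq_le_div_succ (H N : ℕ) :
    ∑ k ∈ range (N + 1), ∑ m ∈ Icc (N + 1) (k + H), (1 : ℝ) / ((m : ℝ) ^ 2 - (k : ℝ) ^ 2)
      ≤ H / (N + 1) := by
  rw [sum_range_sum_Icc_eq_sum_Icc_sum_Icc (fun k m ↦ (1 : ℝ) / ((m : ℝ) ^ 2 - (k : ℝ) ^ 2))]
  calc ∑ d ∈ Icc 1 H, ∑ k ∈ Icc (N + 1 - d) N, 1 / (((k + d : ℕ) : ℝ) ^ 2 - (k : ℝ) ^ 2)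
      ≤ ∑ _d ∈ Icc 1 H, 1 / ((N : ℝ) + 1) :=
        sum_le_sum fun d hd ↦ sum_Icc_one_div_sq_sub_sq_le N (by simp only [mem_Icc] at hd; omega)
    _ = H / (N + 1) := by
        rw [sum_const, Nat.card_Icc, nsmul_eq_mul, Nat.add_sub_cancel, mul_one_div]

theorem stmt8_general (H N : ℕ) (hHN : H < N) :
    ∑ k ∈ Finset.range (N + 1), ∑ m ∈ Finset.Icc (N + 1) (k + H),
        (1 : ℝ) / ((m : ℝ) ^ 2 - (k : ℝ) ^ 2) ≤ (H : ℝ) / N := by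
  have hN : (0 : ℝ) < N := by exact_mod_cast H.zero_le.trans_lt hHN
  calc _ ≤ (H : ℝ) / (N + 1) := sum_one_div_sq_sub_sq_le_div_succ H N
    _ ≤ H / N := by gcongr; linarith

theorem stmt8 (H N : ℕ) (hH : 0 < H) (hHN : H < N) :
    ∑ k ∈ Finset.range (N + 1), ∑ m ∈ Finset.Icc (N + 1) (k + H),
        (1 : ℝ) / ((m : ℝ) ^ 2 - (k : ℝ) ^ 2) ≤ (H : ℝ) / N :=
  stmt8_general H N hHN
end

section
/- There exists an absolute constant C > 0 with the following property: for every bounded function V : ℤ → ℂ and all positive integers H, N with H ≤ N, one has ∑_{(m,k) ∈ X(N)} |V(m − k)| / |m² − k²| ≤ C · ( sup_{|j| ≥ H} |V(j)| + (H/N) · sup_{j ∈ ℤ} |V(j)| ), where X(N) = {(m, k) ∈ ℤ × ℤ : (|m| ≤ N and |k| > N) or (|m| > N and |k| ≤ N)}. -/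
/-!
Write `a = |m|`, `b = |k|`. Then `|m² - k²| = |a - b| (a + b)`, and on `X(N)` the gap
`w = |a - b|` is positive while `a + b ≥ max w (N + 1)`. A pair of `X(N)` is determined by
`min a b`, which of `a, b` is smaller and the two signs, and given `w` the minimum lies in
`[N + 1 - w, N]`; so at most `8 min(w, N + 1)` pairs have gap `w`, and together they contribute
at most `8 (N + 1) / max(w, N + 1)²`. Summed over all `w` this is an absolute constant, and over
`w < H` it is at most `8 H / (N + 1)`. Finally `||m| - |k|| ≤ |m - k|`, so the pairs where
`|V (m - k)|` is only bounded by the global supremum all have gap `w < H`.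
-/

open Finset

def IsCrossing (N : ℕ) (p : ℤ × ℤ) : Prop :=
  (|p.1| ≤ (N : ℤ) ∧ (N : ℤ) < |p.2|) ∨ ((N : ℤ) < |p.1| ∧ |p.2| ≤ (N : ℤ))

instance (N : ℕ) : DecidablePred (IsCrossing N) :=
  fun _ => inferInstanceAs (Decidable (_ ∨ _))

lemma isCrossing_iff_natAbs {N : ℕ} {p : ℤ × ℤ} :
    IsCrossing N p ↔
      (p.1.natAbs ≤ N ∧ N < p.2.natAbs) ∨ (N < p.1.natAbs ∧ p.2.natAbs ≤ N) := by
  simp only [IsCrossing, Int.abs_eq_natAbs]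
  omega

def absGap (p : ℤ × ℤ) : ℕ := ((p.1.natAbs : ℤ) - p.2.natAbs).natAbs

lemma absGap_le_natAbs_sub (p : ℤ × ℤ) : absGap p ≤ (p.1 - p.2).natAbs := by
  unfold absGap; omega

noncomputable def crossingKernel (N : ℕ) (p : ℤ × ℤ) : ℝ :=
  if IsCrossing N p then |(p.1 : ℝ) ^ 2 - (p.2 : ℝ) ^ 2|⁻¹ else 0

/-- `(N + 1) / max(w, N + 1)² = min(w, N + 1) / (w max(w, N + 1))` bounds the total contribution
of the crossing pairs with gap `w`, up to the factor `8`. -/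
noncomputable def gapWeight (N w : ℕ) : ℝ := (N + 1) / (max w (N + 1) : ℕ) ^ 2

lemma crossingKernel_nonneg (N : ℕ) (p : ℤ × ℤ) : 0 ≤ crossingKernel N p := by
  unfold crossingKernel; split_ifs <;> positivity

lemma abs_sq_sub_sq_eq_absGap_mul (m k : ℤ) :
    |(m : ℝ) ^ 2 - (k : ℝ) ^ 2| = (absGap (m, k) * (m.natAbs + k.natAbs) : ℕ) := by
  have h : |m ^ 2 - k ^ 2| = (absGap (m, k) * (m.natAbs + k.natAbs) : ℕ) := by
    rw [← Int.natAbs_sq m, ← Int.natAbs_sq k, sq_sub_sq, abs_mul, absGap, Int.natCast_natAbs,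
      abs_of_nonneg (by positivity : (0 : ℤ) ≤ _)]
    push_cast
    ring
  rw [← Int.cast_natCast, ← h, Int.cast_abs, Int.cast_sub, Int.cast_pow, Int.cast_pow]

lemma crossingKernel_le (N : ℕ) (p : ℤ × ℤ) :
    crossingKernel N p ≤ ((absGap p : ℝ) * (max (absGap p) (N + 1) : ℕ))⁻¹ := by
  unfold crossingKernel
  split_ifs with hp
  · obtain ⟨m, k⟩ := p
    rw [isCrossing_iff_natAbs] at hp
    have hgap : 1 ≤ absGap (m, k) := by unfold absGap; omega
    have hsum : max (absGap (m, k)) (N + 1) ≤ m.natAbs + k.natAbs := by unfold absGap; omega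
    rw [abs_sq_sub_sq_eq_absGap_mul, Nat.cast_mul]
    gcongr
  · positivity

lemma card_filter_absGap_eq_isCrossing_le (N w : ℕ) (s : Finset (ℤ × ℤ)) :
    #{p ∈ s | absGap p = w ∧ IsCrossing N p} ≤ 8 * min w (N + 1) := by
  let code : ℤ × ℤ → ℕ × Bool × Bool × Bool := fun p =>
    (min p.1.natAbs p.2.natAbs, decide (p.1.natAbs ≤ p.2.natAbs), decide (0 ≤ p.1),
      decide (0 ≤ p.2))
  refine (card_le_card_of_injOn code (t := Icc (N + 1 - w) N ×ˢ univ) ?_ ?_).trans ?_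
  · intro p hp
    simp only [coe_filter, Set.mem_ofPred_eq, isCrossing_iff_natAbs, absGap] at hp
    simp only [code, coe_product, coe_Icc, coe_univ, Set.mem_prod, Set.mem_Icc, Set.mem_univ,
      and_true]
    omega
  · rintro ⟨m, k⟩ hp ⟨m', k'⟩ hp' heq
    simp only [coe_filter, Set.mem_ofPred_eq, isCrossing_iff_natAbs, absGap] at hp hp'
    simp only [code, Prod.mk.injEq, decide_eq_decide] at heq
    ext <;> simp only <;> omega
  · simp only [card_product, Nat.card_Icc, card_univ, Fintype.card_prod, Fintype.card_bool]
    omega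

lemma min_mul_inv_le_gapWeight (N w : ℕ) :
    (min w (N + 1) : ℕ) * ((w : ℝ) * (max w (N + 1) : ℕ))⁻¹ ≤ gapWeight N w := by
  rcases Nat.eq_zero_or_pos w with rfl | hw
  · simp only [CharP.cast_eq_zero, zero_mul, inv_zero, mul_zero]
    exact div_nonneg (by positivity) (by positivity)
  · have hminmax : ((min w (N + 1) : ℕ) : ℝ) * (max w (N + 1) : ℕ) = w * (N + 1) := by
      exact_mod_cast min_mul_max w (N + 1)
    have hmax : (0 : ℝ) < (max w (N + 1) : ℕ) := by positivity
    rw [gapWeight]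
    apply le_of_eq
    field_simp
    linear_combination hminmax

lemma sum_crossingKernel_le (N : ℕ) (s : Finset (ℤ × ℤ)) :
    ∑ p ∈ s, crossingKernel N p ≤ 8 * ∑ w ∈ s.image absGap, gapWeight N w := by
  rw [← sum_fiberwise_of_maps_to (fun p hp => mem_image_of_mem absGap hp), mul_sum]
  gcongr with w
  have hsupp : ∀ p ∈ {p ∈ s | absGap p = w}, crossingKernel N p ≠ 0 → IsCrossing N p :=
    fun p _ hp => by_contra fun h => hp (if_neg h)
  calc ∑ p ∈ s with absGap p = w, crossingKernel N p
      = ∑ p ∈ s with absGap p = w ∧ IsCrossing N p, crossingKernel N p := by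
        rw [← sum_filter_of_ne hsupp, filter_filter]
    _ ≤ #{p ∈ s | absGap p = w ∧ IsCrossing N p} •
          ((w : ℝ) * (max w (N + 1) : ℕ))⁻¹ := by
        refine sum_le_card_nsmul _ _ _ fun p hp => ?_
        rw [← (mem_filter.mp hp).2.1]
        exact crossingKernel_le N p
    _ ≤ (8 * min w (N + 1) : ℕ) * ((w : ℝ) * (max w (N + 1) : ℕ))⁻¹ := by
        rw [nsmul_eq_mul]
        gcongr
        exact card_filter_absGap_eq_isCrossing_le N w s
    _ ≤ 8 * gapWeight N w := by
        push_cast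
        rw [mul_assoc]
        gcongr
        exact_mod_cast min_mul_inv_le_gapWeight N w

lemma gapWeight_of_le {N w : ℕ} (hw : w ≤ N + 1) : gapWeight N w = (N + 1 : ℝ)⁻¹ := by
  rw [gapWeight, max_eq_right hw]
  push_cast
  field_simp

lemma sum_gapWeight_le (N : ℕ) (W : Finset ℕ) : ∑ w ∈ W, gapWeight N w ≤ 4 := by
  rw [← sum_filter_add_sum_filter_not W (· ≤ N + 1)]
  have hlow : ∑ w ∈ W with w ≤ N + 1, gapWeight N w ≤ 2 := by
    have hcard : #{w ∈ W | w ≤ N + 1} ≤ N + 2 :=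
      (card_le_card fun w hw => mem_range.mpr (Nat.lt_succ_of_le (mem_filter.mp hw).2)).trans
        (card_range _).le
    calc ∑ w ∈ W with w ≤ N + 1, gapWeight N w
        = #{w ∈ W | w ≤ N + 1} * (N + 1 : ℝ)⁻¹ := by
          rw [sum_congr rfl fun w hw => gapWeight_of_le (mem_filter.mp hw).2, sum_const,
            nsmul_eq_mul]
      _ ≤ (N + 2 : ℕ) * (N + 1 : ℝ)⁻¹ := by gcongr
      _ ≤ 2 := by
        push_cast
        rw [← div_eq_mul_inv, div_le_iff₀ (by positivity)]
        linarith
  have hhigh : ∑ w ∈ W with ¬w ≤ N + 1, gapWeight N w ≤ 2 := by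
    calc ∑ w ∈ W with ¬w ≤ N + 1, gapWeight N w
        = (N + 1) * ∑ w ∈ W with ¬w ≤ N + 1, ((w : ℝ) ^ 2)⁻¹ := by
          rw [mul_sum]
          refine sum_congr rfl fun w hw => ?_
          rw [gapWeight, max_eq_left (not_le.mp (mem_filter.mp hw).2).le, div_eq_mul_inv]
      _ ≤ (N + 1) * ∑ w ∈ Ioo (N + 1) (W.sup id + 1), ((w : ℝ) ^ 2)⁻¹ := by
          refine mul_le_mul_of_nonneg_left (sum_le_sum_of_subset_of_nonneg (fun w hw => ?_)
            fun _ _ _ => by positivity) (by positivity)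
          obtain ⟨hwW, hwN⟩ := mem_filter.mp hw
          exact mem_Ioo.mpr ⟨not_le.mp hwN, Nat.lt_succ_of_le (le_sup (f := id) hwW)⟩
      _ ≤ (N + 1) * (2 / ((N + 1 : ℕ) + 1)) := by gcongr; exact sum_Ioo_inv_sq_le _ _
      _ ≤ 2 := by
          push_cast
          rw [mul_div_assoc', div_le_iff₀ (by positivity)]
          linarith
  linarith

lemma sum_gapWeight_le_of_lt {N H : ℕ} (hHN : H ≤ N + 1) (W : Finset ℕ)
    (hW : ∀ w ∈ W, w < H) :
    ∑ w ∈ W, gapWeight N w ≤ H / (N + 1) := by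
  have hcard : #W ≤ H :=
    (card_le_card fun w hw => mem_range.mpr (hW w hw)).trans (card_range H).le
  calc ∑ w ∈ W, gapWeight N w = #W * (N + 1 : ℝ)⁻¹ := by
        rw [sum_congr rfl fun w hw => gapWeight_of_le (by linarith [hW w hw]), sum_const,
          nsmul_eq_mul]
    _ ≤ H / (N + 1) := by
        rw [div_eq_mul_inv]
        gcongr

lemma sum_norm_mul_crossingKernel_le {E : Type*} [SeminormedAddCommGroup E] (V : ℤ → E)
    {H N : ℕ} (hHN : H ≤ N) {A B : ℝ}
    (hA : ∀ j : ℤ, (H : ℤ) ≤ |j| → ‖V j‖ ≤ A) (hB : ∀ j, ‖V j‖ ≤ B) (s : Finset (ℤ × ℤ)) :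
    ∑ p ∈ s, ‖V (p.1 - p.2)‖ * crossingKernel N p ≤ 32 * (A + H / N * B) := by
  have hA0 : 0 ≤ A := (norm_nonneg _).trans (hA H (by simp))
  have hB0 : 0 ≤ B := (norm_nonneg _).trans (hB 0)
  have hnorm : ∀ p : ℤ × ℤ, ‖V (p.1 - p.2)‖ ≤ A + if absGap p < H then B else 0 := by
    intro p
    by_cases hp : (H : ℤ) ≤ |p.1 - p.2|
    · exact (hA _ hp).trans (le_add_of_nonneg_right (by positivity))
    · have hgap : absGap p < H := by
        have := absGap_le_natAbs_sub p
        rw [Int.abs_eq_natAbs] at hp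
        omega
      rw [if_pos hgap]
      exact (hB _).trans (le_add_of_nonneg_left hA0)
  have hsmall : ∑ p ∈ s with absGap p < H, crossingKernel N p ≤ 8 * (H / N) := by
    refine (sum_crossingKernel_le N _).trans (mul_le_mul_of_nonneg_left ?_ (by norm_num))
    refine (sum_gapWeight_le_of_lt (N := N) (H := H) (by omega) _ fun w hw => ?_).trans ?_
    · obtain ⟨p, hp, rfl⟩ := mem_image.mp hw
      exact (mem_filter.mp hp).2
    · obtain rfl | hN := Nat.eq_zero_or_pos N
      · simp [Nat.le_zero.mp hHN]
      · gcongr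
        linarith
  calc ∑ p ∈ s, ‖V (p.1 - p.2)‖ * crossingKernel N p
      ≤ ∑ p ∈ s, (A * crossingKernel N p +
          B * if absGap p < H then crossingKernel N p else 0) := by
        gcongr with p
        calc ‖V (p.1 - p.2)‖ * crossingKernel N p
            ≤ (A + if absGap p < H then B else 0) * crossingKernel N p :=
              mul_le_mul_of_nonneg_right (hnorm p) (crossingKernel_nonneg N p)
          _ = _ := by split_ifs <;> ring
    _ = A * ∑ p ∈ s, crossingKernel N p +
          B * ∑ p ∈ s with absGap p < H, crossingKernel N p := by
        rw [sum_add_distrib, ← mul_sum, ← mul_sum, sum_filter]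
    _ ≤ A * (8 * 4) + B * (8 * (H / N)) := by
        gcongr
        exact (sum_crossingKernel_le N s).trans
          (mul_le_mul_of_nonneg_left (sum_gapWeight_le N _) (by norm_num))
    _ ≤ 32 * (A + H / N * B) := by
        have : 0 ≤ (H / N : ℝ) * B := by positivity
        nlinarith

theorem stmt10 :
    ∃ C : ℝ, 0 < C ∧ ∀ V : ℤ → ℂ, (∃ B : ℝ, ∀ j : ℤ, ‖V j‖ ≤ B) →
      ∀ H N : ℕ, 0 < H → H ≤ N →
        (∑' p : ℤ × ℤ,
            if (|p.1| ≤ (N : ℤ) ∧ (N : ℤ) < |p.2|) ∨ ((N : ℤ) < |p.1| ∧ |p.2| ≤ (N : ℤ)) then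
              ‖V (p.1 - p.2)‖ / |(p.1 : ℝ) ^ 2 - (p.2 : ℝ) ^ 2|
            else 0) ≤
          C * ((⨆ j : {j : ℤ // (H : ℤ) ≤ |j|}, ‖V j‖) +
            (H : ℝ) / N * ⨆ j : ℤ, ‖V j‖) := by
  refine ⟨32, by norm_num, ?_⟩
  rintro V ⟨B, hB⟩ H N - hHN
  have hsum := sum_norm_mul_crossingKernel_le V hHN
    (fun j hj => le_ciSup (f := fun j : {j : ℤ // (H : ℤ) ≤ |j|} => ‖V j‖)
      ⟨B, Set.forall_mem_range.mpr fun j => hB j⟩ ⟨j, hj⟩)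
    (fun j => le_ciSup (f := fun j => ‖V j‖) ⟨B, Set.forall_mem_range.mpr hB⟩ j)
  calc _ = ∑' p : ℤ × ℤ, ‖V (p.1 - p.2)‖ * crossingKernel N p := tsum_congr fun p => by
        rw [crossingKernel, mul_ite, mul_zero, div_eq_mul_inv]
        rfl
    _ ≤ _ := tsum_le_of_sum_le' (by simpa using hsum ∅) hsum
end

section
/- Let q = (q(k))_{k ∈ ℤ} be a square-summable sequence of complex numbers, let N be a positive integer and y ∈ ℝ, and set λ = N² + N + iy. Then ψ_N(y) ≤ N² · ( ‖q‖²/N + 16 · E_{√N}(q)² ) · b_N(y) + 16 · E_{4N}(q)² · a_N(y). -/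
/-- `ψ_N(y) = ∑_{j,m ∈ ℤ} (j−m)² |q(j−m)|² / (|λ−j²|·|λ−m²|)`. -/
noncomputable def psi (q : ℤ → ℂ) (N : ℕ) (y : ℝ) : ℝ :=
  ∑' p : ℤ × ℤ,
    ((p.1 : ℝ) - p.2) ^ 2 * ‖q (p.1 - p.2)‖ ^ 2 /
      (‖lam N y - (p.1 : ℂ) ^ 2‖ * ‖lam N y - (p.2 : ℂ) ^ 2‖)

/-- `a_N(y) = ∑_{k ∈ ℤ} 1/|λ−k²|`. -/
noncomputable def aN (N : ℕ) (y : ℝ) : ℝ :=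
  ∑' k : ℤ, 1 / ‖lam N y - (k : ℂ) ^ 2‖

/-- `b_N(y) = ∑_{k ∈ ℤ} 1/|λ−k²|²`. -/
noncomputable def bN (N : ℕ) (y : ℝ) : ℝ :=
  ∑' k : ℤ, 1 / ‖lam N y - (k : ℂ) ^ 2‖ ^ 2

/-- `‖q‖ = (∑_{k ∈ ℤ} |q(k)|²)^{1/2}`. -/
noncomputable def l2norm (q : ℤ → ℂ) : ℝ :=
  Real.sqrt (∑' k : ℤ, ‖q k‖ ^ 2)

/-- The tail `E_M(q) = (∑_{|k| ≥ M} |q(k)|²)^{1/2}`. -/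
noncomputable def tailE (q : ℤ → ℂ) (M : ℝ) : ℝ :=
  Real.sqrt (∑' k : ℤ, if M ≤ |(k : ℝ)| then ‖q k‖ ^ 2 else 0)

/-!
Write `k = j - m` and `A j = |λ - j²|`; since no square lies strictly between `N²` and `(N + 1)²`,
`A j ≥ N`, and `A j ≥ j² - N² - N`. If `|k| ≤ 4N`, AM-GM gives
`1 / (A j A m) ≤ (A j⁻² + A m⁻²) / 2`, and `k² |q k|²` is at most `N |q k|²` when `k² ≤ N`
and at most `16 N² |q k|²` otherwise. If `|k| > 4N`, then `A j + A m ≥ k² / 8`, so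
`k² / (A j A m) ≤ 8 (A j⁻¹ + A m⁻¹)`. In both cases the resulting double sums are convolutions
over `ℤ × ℤ` and factor into a sum over `k` times `b_N` or `a_N`.
-/

lemma summable_one_div_of_sq_sub_le {f : ℤ → ℝ} (C : ℝ) (h1 : ∀ k, 1 ≤ f k)
    (h2 : ∀ k : ℤ, (k : ℝ) ^ 2 - C ≤ f k) : Summable fun k => 1 / f k := by
  refine Summable.of_norm_bounded_eventually
    ((Real.summable_one_div_int_pow.mpr one_lt_two).mul_left (|C| + 1)) ?_
  filter_upwards [Filter.eventually_cofinite_ne 0] with k hk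
  have hk2 : 0 < (k : ℝ) ^ 2 := by positivity
  have hf : (k : ℝ) ^ 2 ≤ (|C| + 1) * f k := by
    linarith [mul_nonneg (abs_nonneg C) (sub_nonneg.mpr (h1 k)), h2 k, le_abs_self C]
  rw [Real.norm_of_nonneg (one_div_nonneg.mpr (zero_le_one.trans (h1 k))), mul_one_div,
    div_le_div_iff₀ (by linarith [h1 k]) hk2]
  linarith

section Convolution

variable {G : Type*} [AddCommGroup G] {w g : G → ℝ}

lemma hasSum_mul_sub_mul_left (hw : Summable w) (hg : Summable g) (hw0 : 0 ≤ w) (hg0 : 0 ≤ g) :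
    HasSum (fun p : G × G => w (p.1 - p.2) * g p.1) ((∑' k, w k) * ∑' j, g j) :=
  let e : G × G ≃ G × G :=
    ⟨fun p => (p.1 - p.2, p.1), fun p => (p.2, p.2 - p.1), fun p => by simp, fun p => by simp⟩
  e.hasSum_iff.mpr (hw.hasSum.mul hg.hasSum (hw.mul_of_nonneg hg hw0 hg0))

lemma hasSum_mul_sub_mul_right (hw : Summable w) (hg : Summable g) (hw0 : 0 ≤ w) (hg0 : 0 ≤ g) :
    HasSum (fun p : G × G => w (p.1 - p.2) * g p.2) ((∑' k, w k) * ∑' j, g j) :=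
  let e : G × G ≃ G × G :=
    ⟨fun p => (p.1 - p.2, p.2), fun p => (p.1 + p.2, p.2), fun p => by simp, fun p => by simp⟩
  e.hasSum_iff.mpr (hw.hasSum.mul hg.hasSum (hw.mul_of_nonneg hg hw0 hg0))

lemma hasSum_mul_sub_mul_add (hw : Summable w) (hg : Summable g) (hw0 : 0 ≤ w) (hg0 : 0 ≤ g) :
    HasSum (fun p : G × G => w (p.1 - p.2) * (g p.1 + g p.2)) (2 * ((∑' k, w k) * ∑' j, g j)) := by
  simpa only [mul_add, two_mul] using
    (hasSum_mul_sub_mul_left hw hg hw0 hg0).add (hasSum_mul_sub_mul_right hw hg hw0 hg0)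

end Convolution

lemma div_mul_le_half_mul_one_div_sq_add {a b c : ℝ} (ha : 0 < a) (hb : 0 < b) (hc : 0 ≤ c) :
    c / (a * b) ≤ c / 2 * (1 / a ^ 2 + 1 / b ^ 2) := by
  have := two_mul_le_add_sq (1 / a) (1 / b)
  rw [div_pow, div_pow, one_pow] at this
  calc c / (a * b) = c / 2 * (2 * (1 / a) * (1 / b)) := by field_simp
    _ ≤ c / 2 * (1 / a ^ 2 + 1 / b ^ 2) := by gcongr

lemma div_mul_le_mul_one_div_add {a b c d : ℝ} (ha : 0 < a) (hb : 0 < b) (h : c ≤ d * (a + b)) :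
    c / (a * b) ≤ d * (1 / a + 1 / b) := by
  rw [div_le_iff₀ (by positivity)]
  calc c ≤ d * (a + b) := h
    _ = d * (1 / a + 1 / b) * (a * b) := by field_simp; ring

section Distances

variable (N : ℕ) (y : ℝ)

lemma abs_sub_sq_le_norm_lam_sub_sq (j : ℤ) :
    |(N : ℝ) ^ 2 + N - (j : ℝ) ^ 2| ≤ ‖lam N y - (j : ℂ) ^ 2‖ := by
  have hre : (lam N y - (j : ℂ) ^ 2).re = (N : ℝ) ^ 2 + N - (j : ℝ) ^ 2 := by
    simp [lam, pow_two]
  exact hre ▸ Complex.abs_re_le_norm _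

lemma natCast_le_abs_sq_add_sub_sq (j : ℤ) : (N : ℝ) ≤ |(N : ℝ) ^ 2 + N - (j : ℝ) ^ 2| := by
  rcases le_or_gt |j| N with h | h
  · have h' : j ^ 2 ≤ (N : ℤ) ^ 2 := sq_abs j ▸ pow_le_pow_left₀ (abs_nonneg j) h 2
    replace h' : (j : ℝ) ^ 2 ≤ (N : ℝ) ^ 2 := by exact_mod_cast h'
    rw [abs_of_nonneg (by linarith)]
    linarith
  · have h' : ((N : ℤ) + 1) ^ 2 ≤ j ^ 2 :=
      sq_abs j ▸ pow_le_pow_left₀ (by positivity) (Int.add_one_le_iff.mpr h) 2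
    replace h' : ((N : ℝ) + 1) ^ 2 ≤ (j : ℝ) ^ 2 := by exact_mod_cast h'
    rw [abs_of_nonpos (by linarith)]
    linarith

lemma natCast_le_norm_lam_sub_sq (j : ℤ) : (N : ℝ) ≤ ‖lam N y - (j : ℂ) ^ 2‖ :=
  (natCast_le_abs_sq_add_sub_sq N j).trans (abs_sub_sq_le_norm_lam_sub_sq N y j)

lemma sq_sub_le_norm_lam_sub_sq (j : ℤ) :
    (j : ℝ) ^ 2 - ((N : ℝ) ^ 2 + N) ≤ ‖lam N y - (j : ℂ) ^ 2‖ := by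
  linarith [neg_abs_le ((N : ℝ) ^ 2 + N - (j : ℝ) ^ 2), abs_sub_sq_le_norm_lam_sub_sq N y j]

lemma sq_sub_le_eight_mul_norm_add {j m : ℤ}
    (hjm : 16 * (N : ℝ) ^ 2 < ((j : ℝ) - m) ^ 2) :
    ((j : ℝ) - m) ^ 2 ≤ 8 * (‖lam N y - (j : ℂ) ^ 2‖ + ‖lam N y - (m : ℂ) ^ 2‖) := by
  have hN : (N : ℝ) ≤ (N : ℝ) ^ 2 := by exact_mod_cast Nat.le_self_pow two_ne_zero N
  nlinarith [sq_sub_le_norm_lam_sub_sq N y j, sq_sub_le_norm_lam_sub_sq N y m,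
    norm_nonneg (lam N y - (j : ℂ) ^ 2), norm_nonneg (lam N y - (m : ℂ) ^ 2),
    sq_nonneg ((j : ℝ) + m)]

lemma summable_one_div_norm_lam_sub_sq (hN : 0 < N) :
    Summable fun k : ℤ => 1 / ‖lam N y - (k : ℂ) ^ 2‖ :=
  summable_one_div_of_sq_sub_le ((N : ℝ) ^ 2 + N)
    (fun k => (Nat.one_le_cast.mpr hN).trans (natCast_le_norm_lam_sub_sq N y k))
    (sq_sub_le_norm_lam_sub_sq N y)

lemma summable_one_div_norm_lam_sub_sq_sq (hN : 0 < N) :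
    Summable fun k : ℤ => 1 / ‖lam N y - (k : ℂ) ^ 2‖ ^ 2 := by
  refine (summable_one_div_norm_lam_sub_sq N y hN).of_nonneg_of_le (fun k => by positivity)
    fun k => ?_
  have h1 := (Nat.one_le_cast.mpr hN).trans (natCast_le_norm_lam_sub_sq N y k)
  exact one_div_le_one_div_of_le (by positivity) (by nlinarith)

end Distances

noncomputable def lowWeight (q : ℤ → ℂ) (N : ℕ) (k : ℤ) : ℝ :=
  if (k : ℝ) ^ 2 ≤ 16 * (N : ℝ) ^ 2 then (k : ℝ) ^ 2 * ‖q k‖ ^ 2 else 0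

noncomputable def highWeight (q : ℤ → ℂ) (N : ℕ) (k : ℤ) : ℝ :=
  if (k : ℝ) ^ 2 ≤ 16 * (N : ℝ) ^ 2 then 0 else 8 * ‖q k‖ ^ 2

section Weights

variable (q : ℤ → ℂ) (N : ℕ)

lemma lowWeight_nonneg : 0 ≤ lowWeight q N := fun k => by
  unfold lowWeight; split_ifs <;> positivity

lemma highWeight_nonneg : 0 ≤ highWeight q N := fun k => by
  unfold highWeight; split_ifs <;> positivity

lemma lowWeight_le (k : ℤ) :
    lowWeight q N k ≤
      N * ‖q k‖ ^ 2 + 16 * (N : ℝ) ^ 2 * (if √(N : ℝ) ≤ |(k : ℝ)| then ‖q k‖ ^ 2 else 0) := by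
  have hq : 0 ≤ ‖q k‖ ^ 2 := by positivity
  unfold lowWeight
  split_ifs with hlow htail
  · nlinarith
  · rw [Real.sqrt_le_left (abs_nonneg _), sq_abs, not_le] at htail
    nlinarith
  · positivity
  · positivity

lemma highWeight_le (k : ℤ) :
    highWeight q N k ≤ 8 * (if 4 * (N : ℝ) ≤ |(k : ℝ)| then ‖q k‖ ^ 2 else 0) := by
  have htail : (0 : ℝ) ≤ if 4 * (N : ℝ) ≤ |(k : ℝ)| then ‖q k‖ ^ 2 else 0 := by
    split_ifs <;> positivity
  unfold highWeight
  by_cases hlow : (k : ℝ) ^ 2 ≤ 16 * (N : ℝ) ^ 2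
  · rw [if_pos hlow]
    linarith
  · have hhigh : 4 * (N : ℝ) ≤ |(k : ℝ)| := by
      rw [← sq_le_sq₀ (by positivity) (abs_nonneg _), sq_abs]
      linarith
    rw [if_neg hlow, if_pos hhigh]

variable {q}

lemma summable_tail (hq : Summable fun k : ℤ => ‖q k‖ ^ 2) (M : ℝ) :
    Summable fun k : ℤ => if M ≤ |(k : ℝ)| then ‖q k‖ ^ 2 else 0 :=
  hq.of_nonneg_of_le (fun k => by split_ifs <;> positivity)
    fun k => by split_ifs <;> [exact le_rfl; positivity]

lemma sq_tailE (M : ℝ) : tailE q M ^ 2 = ∑' k : ℤ, if M ≤ |(k : ℝ)| then ‖q k‖ ^ 2 else 0 :=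
  Real.sq_sqrt (tsum_nonneg fun k => by split_ifs <;> positivity)

lemma sq_l2norm : l2norm q ^ 2 = ∑' k : ℤ, ‖q k‖ ^ 2 :=
  Real.sq_sqrt (tsum_nonneg fun k => by positivity)

lemma summable_lowWeight (hq : Summable fun k : ℤ => ‖q k‖ ^ 2) : Summable (lowWeight q N) :=
  (hq.mul_left _ |>.add ((summable_tail hq _).mul_left _)).of_nonneg_of_le
    (lowWeight_nonneg q N) (lowWeight_le q N)

lemma summable_highWeight (hq : Summable fun k : ℤ => ‖q k‖ ^ 2) : Summable (highWeight q N) :=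
  ((summable_tail hq _).mul_left _).of_nonneg_of_le (highWeight_nonneg q N) (highWeight_le q N)

lemma tsum_lowWeight_le (hq : Summable fun k : ℤ => ‖q k‖ ^ 2) :
    ∑' k, lowWeight q N k ≤ N * l2norm q ^ 2 + 16 * (N : ℝ) ^ 2 * tailE q √(N : ℝ) ^ 2 := by
  rw [sq_l2norm, sq_tailE, ← tsum_mul_left, ← tsum_mul_left,
    ← (hq.mul_left _).tsum_add ((summable_tail hq _).mul_left _)]
  exact (summable_lowWeight N hq).tsum_le_tsum (lowWeight_le q N)
    (hq.mul_left _ |>.add ((summable_tail hq _).mul_left _))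

lemma tsum_highWeight_le (hq : Summable fun k : ℤ => ‖q k‖ ^ 2) :
    ∑' k, highWeight q N k ≤ 8 * tailE q (4 * N) ^ 2 := by
  rw [sq_tailE, ← tsum_mul_left]
  exact (summable_highWeight N hq).tsum_le_tsum (highWeight_le q N)
    ((summable_tail hq _).mul_left _)

end Weights

section Psi

variable (q : ℤ → ℂ) {N : ℕ} (y : ℝ)

lemma psi_summand_le (hN : 0 < N) (j m : ℤ) :
    ((j : ℝ) - m) ^ 2 * ‖q (j - m)‖ ^ 2 /
        (‖lam N y - (j : ℂ) ^ 2‖ * ‖lam N y - (m : ℂ) ^ 2‖) ≤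
      lowWeight q N (j - m) / 2 *
          (1 / ‖lam N y - (j : ℂ) ^ 2‖ ^ 2 + 1 / ‖lam N y - (m : ℂ) ^ 2‖ ^ 2) +
        highWeight q N (j - m) * (1 / ‖lam N y - (j : ℂ) ^ 2‖ + 1 / ‖lam N y - (m : ℂ) ^ 2‖) := by
  have hpos : ∀ k : ℤ, 0 < ‖lam N y - (k : ℂ) ^ 2‖ := fun k =>
    (Nat.cast_pos.mpr hN).trans_le (natCast_le_norm_lam_sub_sq N y k)
  have hcast : (j : ℝ) - m = ((j - m : ℤ) : ℝ) := by push_cast; ring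
  unfold lowWeight highWeight
  rw [hcast]
  split_ifs with hjm
  · rw [zero_mul, add_zero]
    exact div_mul_le_half_mul_one_div_sq_add (hpos j) (hpos m) (by positivity)
  · rw [zero_div, zero_mul, zero_add]
    refine div_mul_le_mul_one_div_add (hpos j) (hpos m) ?_
    rw [← hcast] at hjm ⊢
    have := sq_sub_le_eight_mul_norm_add N y (not_le.mp hjm)
    linarith [mul_le_mul_of_nonneg_left this (sq_nonneg ‖q (j - m)‖)]

variable {q}

lemma psi_le_tsum_weights (hq : Summable fun k : ℤ => ‖q k‖ ^ 2) (hN : 0 < N) :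
    psi q N y ≤ (∑' k, lowWeight q N k) * bN N y + 2 * (∑' k, highWeight q N k) * aN N y := by
  have hlow := hasSum_mul_sub_mul_add ((summable_lowWeight N hq).div_const 2)
    (summable_one_div_norm_lam_sub_sq_sq N y hN)
    (fun k => div_nonneg (lowWeight_nonneg q N k) zero_le_two) (fun k => by positivity)
  have hhigh := hasSum_mul_sub_mul_add (summable_highWeight N hq)
    (summable_one_div_norm_lam_sub_sq N y hN) (highWeight_nonneg q N) (fun k => by positivity)
  have hsum := hlow.add hhigh
  have hF : Summable fun p : ℤ × ℤ => ((p.1 : ℝ) - p.2) ^ 2 * ‖q (p.1 - p.2)‖ ^ 2 /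
      (‖lam N y - (p.1 : ℂ) ^ 2‖ * ‖lam N y - (p.2 : ℂ) ^ 2‖) :=
    hsum.summable.of_nonneg_of_le (fun p => by positivity) fun p => psi_summand_le q y hN p.1 p.2
  refine (hasSum_le (fun p => ?_) hF.hasSum hsum).trans_eq ?_
  · exact psi_summand_le q y hN p.1 p.2
  · rw [tsum_div_const]
    unfold aN bN
    ring

end Psi

theorem stmt11 (q : ℤ → ℂ) (hq : Summable fun k : ℤ => ‖q k‖ ^ 2)
    (N : ℕ) (hN : 0 < N) (y : ℝ) :
    psi q N y ≤
      (N : ℝ) ^ 2 * (l2norm q ^ 2 / N + 16 * tailE q (Real.sqrt N) ^ 2) * bN N y +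
        16 * tailE q (4 * N) ^ 2 * aN N y := by
  have ha : 0 ≤ aN N y := tsum_nonneg fun k => by positivity
  have hb : 0 ≤ bN N y := tsum_nonneg fun k => by positivity
  calc psi q N y
      ≤ (∑' k, lowWeight q N k) * bN N y + 2 * (∑' k, highWeight q N k) * aN N y :=
        psi_le_tsum_weights y hq hN
    _ ≤ (N * l2norm q ^ 2 + 16 * (N : ℝ) ^ 2 * tailE q √(N : ℝ) ^ 2) * bN N y +
          2 * (8 * tailE q (4 * N) ^ 2) * aN N y := by
        gcongr
        · exact tsum_lowWeight_le N hq
        · exact tsum_highWeight_le N hq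
    _ = _ := by
        field_simp
        ring
end

section
/- Let N be a positive integer, y ∈ ℝ, and set λ = N² + N + iy. Then for all integers m, s with |s| > 4N, one has s² / ( |λ − (m + s)²| · |λ − m²| ) ≤ 8/|λ − m²| + 8/|λ − (m + s)²|. -/
/-! Since `‖λ - k²‖ ≥ k² - Re λ`, after clearing denominators the claim reduces to the
elementary bound `s² ≤ 8((m + s)² + m² - 2 Re λ)`, which follows from
`(m + s)² + m² ≥ s² / 2` and `16 Re λ = 16 (N² + N) ≤ 3 s²`. -/

/-- When `a` or `b` vanishes, the left side is `c / 0 = 0`. -/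
lemma div_mul_le_div_add_div_of_le_mul_add {a b c k : ℝ} (ha : 0 ≤ a) (hb : 0 ≤ b) (hk : 0 ≤ k)
    (hc : c ≤ k * (a + b)) : c / (a * b) ≤ k / b + k / a := by
  rcases ha.eq_or_lt with rfl | ha
  · simpa using div_nonneg hk hb
  rcases hb.eq_or_lt with rfl | hb
  · simpa using div_nonneg hk ha.le
  calc c / (a * b) ≤ k * (a + b) / (a * b) := by gcongr
    _ = k / b + k / a := by field_simp

lemma sub_re_le_norm_sub_ofReal (z : ℂ) (x : ℝ) : x - z.re ≤ ‖z - x‖ := by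
  simpa using (neg_le_abs (z - x).re).trans (Complex.abs_re_le_norm _)

lemma lam_re (N : ℕ) (y : ℝ) : (lam N y).re = (N : ℝ) ^ 2 + N := by
  simp [lam, sq]

lemma sq_sub_lam_re_le_norm (N : ℕ) (y : ℝ) (k : ℤ) :
    (k : ℝ) ^ 2 - ((N : ℝ) ^ 2 + N) ≤ ‖lam N y - (k : ℂ) ^ 2‖ := by
  have h := sub_re_le_norm_sub_ofReal (lam N y) ((k : ℝ) ^ 2)
  push_cast at h
  rwa [lam_re] at h

lemma sq_le_eight_mul_sq_add_sq_sub {m s a : ℝ} (ha : 16 * a ≤ 3 * s ^ 2) :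
    s ^ 2 ≤ 8 * ((m + s) ^ 2 - a + (m ^ 2 - a)) := by
  nlinarith [sq_nonneg (2 * m + s)]

lemma sixteen_mul_sq_add_le_three_mul_sq {N : ℕ} {s : ℤ} (hs : 4 * (N : ℤ) < |s|) :
    16 * ((N : ℝ) ^ 2 + N) ≤ 3 * (s : ℝ) ^ 2 := by
  have h : 4 * (N : ℝ) + 1 ≤ |(s : ℝ)| := by exact_mod_cast hs
  rw [← sq_abs (s : ℝ)]
  nlinarith [Nat.cast_nonneg (α := ℝ) N]

theorem stmt13_general (N : ℕ) (y : ℝ) (m s : ℤ) (hs : 4 * (N : ℤ) < |s|) :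
    (s : ℝ) ^ 2 /
        (‖lam N y - ((m + s : ℤ) : ℂ) ^ 2‖ * ‖lam N y - (m : ℂ) ^ 2‖) ≤
      8 / ‖lam N y - (m : ℂ) ^ 2‖ +
        8 / ‖lam N y - ((m + s : ℤ) : ℂ) ^ 2‖ := by
  refine div_mul_le_div_add_div_of_le_mul_add (norm_nonneg _) (norm_nonneg _) (by norm_num) ?_
  have hA := sq_sub_lam_re_le_norm N y (m + s)
  have hB := sq_sub_lam_re_le_norm N y m
  push_cast at hA ⊢
  have := sq_le_eight_mul_sq_add_sq_sub (m := (m : ℝ)) (sixteen_mul_sq_add_le_three_mul_sq hs)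
  linarith

theorem stmt13 (N : ℕ) (hN : 0 < N) (y : ℝ) (m s : ℤ) (hs : 4 * (N : ℤ) < |s|) :
    (s : ℝ) ^ 2 /
        (‖lam N y - ((m + s : ℤ) : ℂ) ^ 2‖ * ‖lam N y - (m : ℂ) ^ 2‖) ≤
      8 / ‖lam N y - (m : ℂ) ^ 2‖ +
        8 / ‖lam N y - ((m + s : ℤ) : ℂ) ^ 2‖ :=
  stmt13_general N y m s hs
end
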